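/- arXiv:2201.04380 — 9 statements merged into one kernel-verified Lean document; each statement's English description precedes it below -/
import Mathlib

section
/- Let G be a bipartite graph with fixed parts A and B that is proximinal for some semimetric space (X,d) belonging to the class UBPP (i.e., A and B are disjoint proximinal subsets of X and, for all a ∈ A and b ∈ B, {a,b} is an edge of G if and only if d(a,b) = dist(A,B)). Then G has at most one edge, the cardinality of the vertex set of G is at most the cardinality 𝔠 of the continuum, and if G has no edges then both A and B are infinite sets. -/
open Set

universe u v

/-- A semimetric on `X`: a symmetric, nonnegative function vanishing exactly on the diagonal. -/
def IsSemimetric {X : Type u} (d : X → X → ℝ) : Prop :=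
  (∀ x y, 0 ≤ d x y) ∧ (∀ x y, d x y = d y x) ∧ (∀ x y, d x y = 0 ↔ x = y)

/-- A metric: a semimetric satisfying the triangle inequality. -/
def IsMetricD {X : Type u} (d : X → X → ℝ) : Prop :=
  IsSemimetric d ∧ ∀ x y z, d x y ≤ d x z + d z y

/-- An ultrametric: a semimetric satisfying the strong triangle inequality. -/
def IsUltrametricD {X : Type u} (d : X → X → ℝ) : Prop :=
  IsSemimetric d ∧ ∀ x y z, d x y ≤ max (d x z) (d z y)

/-- `sDist d A B = inf {d a b : a ∈ A, b ∈ B}`. -/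
noncomputable def sDist {X : Type u} (d : X → X → ℝ) (A B : Set X) : ℝ :=
  sInf {r | ∃ a ∈ A, ∃ b ∈ B, d a b = r}

/-- `pDist d x A = inf {d x a : a ∈ A}`. -/
noncomputable def pDist {X : Type u} (d : X → X → ℝ) (x : X) (A : Set X) : ℝ :=
  sInf {r | ∃ a ∈ A, d x a = r}

/-- `A` is proximinal: every point of `X` has a best approximation in `A`. -/
def Proximinal {X : Type u} (d : X → X → ℝ) (A : Set X) : Prop :=
  ∀ x : X, ∃ a ∈ A, d x a = pDist d x A

/-- Strong rigidity: distinct pairs of distinct points have distinct distances. -/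
def StronglyRigid {X : Type u} (d : X → X → ℝ) : Prop :=
  ∀ x y u v : X, x ≠ y → d x y = d u v → ({x, y} : Set X) = {u, v}

/-- Strong rigidity of the subspace `S`. -/
def StronglyRigidOn {X : Type u} (d : X → X → ℝ) (S : Set X) : Prop :=
  ∀ x ∈ S, ∀ y ∈ S, ∀ u ∈ S, ∀ v ∈ S, x ≠ y → d x y = d u v → ({x, y} : Set X) = {u, v}

/-- Weak rigidity: every three-point subspace is strongly rigid. -/
def WeaklyRigid {X : Type u} (d : X → X → ℝ) : Prop :=
  ∀ S : Set X, S.encard = 3 → StronglyRigidOn d S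

/-- The class UBPP: any two disjoint proximinal subsets admit at most one best proximity pair. -/
def UBPP {X : Type u} (d : X → X → ℝ) : Prop :=
  ∀ A B : Set X, Disjoint A B → Proximinal d A → Proximinal d B →
    ∀ a₁ ∈ A, ∀ b₁ ∈ B, ∀ a₂ ∈ A, ∀ b₂ ∈ B,
      d a₁ b₁ = sDist d A B → d a₂ b₂ = sDist d A B → a₁ = a₂ ∧ b₁ = b₂

/-- `D(X)`: the set of all nonzero distances. -/
def DistSet {X : Type u} (d : X → X → ℝ) : Set ℝ :=
  {r | ∃ x y : X, x ≠ y ∧ d x y = r}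

/-- The unordered pairs of distinct points whose distance is `r`. -/
def PairsAt {X : Type u} (d : X → X → ℝ) (r : ℝ) : Set (Set X) :=
  {s | ∃ x y : X, x ≠ y ∧ d x y = r ∧ s = {x, y}}

/-- All distances between distinct unordered pairs of distinct points are pairwise distinct. -/
def AllDistinct {X : Type u} (d : X → X → ℝ) : Prop :=
  ∀ x y u v : X, x ≠ y → u ≠ v → d x y = d u v → ({x, y} : Set X) = {u, v}

/-- A weak similarity of `(X,d)` and `(Y,ρ)`. -/
def WeakSimilarity {X : Type u} {Y : Type v} (d : X → X → ℝ) (ρ : Y → Y → ℝ)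
    (Φ : X → Y) : Prop :=
  Function.Bijective Φ ∧ ∃ ψ : ℝ → ℝ, Set.BijOn ψ (DistSet ρ) (DistSet d) ∧
    StrictMonoOn ψ (DistSet ρ) ∧ ∀ x y : X, x ≠ y → d x y = ψ (ρ (Φ x) (Φ y))

/-- The four-point semimetric space `(X*, ρ*)` of Example 3.4, with points
`a₁ = 0, a₂ = 1, b₁ = 2, b₂ = 3`. -/
noncomputable def rhoStar : Fin 4 → Fin 4 → ℝ := fun i j =>
  !![(0 : ℝ), 5, 3, 1; 5, 0, 2, 3; 3, 2, 0, 4; 1, 3, 4, 0] i j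

/-- The restriction of a semimetric to the subspace `Y`. -/
def restrictS {X : Type u} (d : X → X → ℝ) (Y : Set X) : ↥Y → ↥Y → ℝ :=
  fun a b => d a.1 b.1

/-- The condition that the digraph `Di_Y` of a four-point space is isomorphic to one of
`Di¹, Di², Di³, Di⁴`: either all six distances are pairwise distinct, or there are exactly
five distance values, exactly one of which is attained by exactly two unordered pairs,
each other value by exactly one pair, and the repeated value has at least two values below it. -/
def DiOK {X : Type u} (d : X → X → ℝ) : Prop :=
  AllDistinct d ∨
    ((DistSet d).ncard = 5 ∧ ∃ c ∈ DistSet d,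
      (PairsAt d c).ncard = 2 ∧
      (∀ r ∈ DistSet d, r ≠ c → (PairsAt d r).ncard = 1) ∧
      2 ≤ ({r ∈ DistSet d | r < c}).ncard)


lemma finite_proximinal {X : Type u} {d : X → X → ℝ} (hnn : ∀ x y, 0 ≤ d x y)
    {S : Set X} (hfin : S.Finite) (hne : S.Nonempty) : Proximinal d S := by
  intro x
  obtain ⟨a, haS, hmin⟩ := Set.exists_min_image S (d x) hfin hne
  refine ⟨a, haS, le_antisymm ?_ (csInf_le ⟨0, ?_⟩ ⟨a, haS, rfl⟩)⟩
  · refine le_csInf ⟨d x a, a, haS, rfl⟩ ?_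
    rintro r ⟨s, hs, rfl⟩
    exact hmin s hs
  · rintro r ⟨s, hs, rfl⟩
    exact hnn x s

lemma exists_edge {X : Type u} {d : X → X → ℝ} (hnn : ∀ x y, 0 ≤ d x y)
    {A B : Set X} (hAfin : A.Finite) (hAne : A.Nonempty) (hBne : B.Nonempty)
    (hB : Proximinal d B) : ∃ a ∈ A, ∃ b ∈ B, d a b = sDist d A B := by
  obtain ⟨a₀, ha₀, hmin⟩ := Set.exists_min_image A (fun a => pDist d a B) hAfin hAne
  obtain ⟨b₀, hb₀, hdb⟩ := hB a₀
  refine ⟨a₀, ha₀, b₀, hb₀, le_antisymm ?_ (csInf_le ⟨0, ?_⟩ ⟨a₀, ha₀, b₀, hb₀, rfl⟩)⟩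
  · refine le_csInf ⟨d a₀ b₀, a₀, ha₀, b₀, hb₀, rfl⟩ ?_
    rintro r ⟨a, ha, b, hb, rfl⟩
    calc d a₀ b₀ = pDist d a₀ B := hdb
      _ ≤ pDist d a B := hmin a ha
      _ ≤ d a b := csInf_le ⟨0, by rintro r ⟨s, hs, rfl⟩; exact hnn a s⟩ ⟨b, hb, rfl⟩
  · rintro r ⟨a, _, b, _, rfl⟩
    exact hnn a b

/-- If a bipartite graph with parts `A`, `B` is proximinal for a semimetric
space `(X,d)` of class UBPP, then it has at most one edge, at most continuum many vertices,
and if it has no edges then `A` and `B` are infinite. -/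
theorem stmt_0 {X : Type u} (d : X → X → ℝ) (hd : IsSemimetric d) (hX : UBPP d)
    (A B : Set X) (hAne : A.Nonempty) (hBne : B.Nonempty)
    (hdisj : Disjoint A B) (hA : Proximinal d A) (hB : Proximinal d B) :
    {p : X × X | p.1 ∈ A ∧ p.2 ∈ B ∧ d p.1 p.2 = sDist d A B}.Subsingleton ∧
    Cardinal.mk ↥(A ∪ B) ≤ Cardinal.continuum ∧
    ((∀ a ∈ A, ∀ b ∈ B, d a b ≠ sDist d A B) → A.Infinite ∧ B.Infinite) := by
  obtain ⟨hnn, hsymm, _⟩ := hd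
  obtain ⟨a₀, ha₀⟩ := hAne
  obtain ⟨b₀, hb₀⟩ := hBne
  refine ⟨?_, ?_, ?_⟩
  · rintro ⟨a₁, b₁⟩ ⟨ha₁, hb₁, h₁⟩ ⟨a₂, b₂⟩ ⟨ha₂, hb₂, h₂⟩
    obtain ⟨e₁, e₂⟩ := hX A B hdisj hA hB a₁ ha₁ b₁ hb₁ a₂ ha₂ b₂ hb₂ h₁ h₂
    exact Prod.ext e₁ e₂
  · -- cardinality
    have hinjA : Function.Injective (fun a : ↥A => d a.1 b₀) := by
      intro a₁ a₂ h
      by_contra hne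
      have hne' : a₁.1 ≠ a₂.1 := fun h' => hne (Subtype.ext h')
      have hsubA : ({a₁.1, a₂.1} : Set X) ⊆ A := by
        intro x hx
        rcases hx with h | h <;> rw [h]
        exacts [a₁.2, a₂.2]
      have hsubB : ({b₀} : Set X) ⊆ B := by intro x hx; rw [hx]; exact hb₀
      have hdisj' : Disjoint ({a₁.1, a₂.1} : Set X) ({b₀} : Set X) := hdisj.mono hsubA hsubB
      have hpA : Proximinal d ({a₁.1, a₂.1} : Set X) := finite_proximinal hnn (Set.toFinite _) ⟨a₁.1, Or.inl rfl⟩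
      have hpB : Proximinal d ({b₀} : Set X) := finite_proximinal hnn (Set.toFinite _) ⟨b₀, rfl⟩
      have hset : {r | ∃ a ∈ ({a₁.1, a₂.1} : Set X), ∃ b ∈ ({b₀} : Set X), d a b = r} = {d a₁.1 b₀} := by
        ext r
        constructor
        · rintro ⟨a, (rfl | rfl), b, rfl, rfl⟩
          · rfl
          · exact h.symm
        · rintro rfl
          exact ⟨a₁.1, Or.inl rfl, b₀, rfl, rfl⟩
      have hsd : sDist d ({a₁.1, a₂.1} : Set X) ({b₀} : Set X) = d a₁.1 b₀ := by
        rw [sDist, hset, csInf_singleton]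
      have := hX _ _ hdisj' hpA hpB a₁.1 (Or.inl rfl) b₀ rfl a₂.1 (Or.inr rfl) b₀ rfl
        (by rw [hsd]) (by rw [hsd]; exact h.symm)
      exact hne' this.1
    have hinjB : Function.Injective (fun b : ↥B => d a₀ b.1) := by
      intro b₁ b₂ h
      by_contra hne
      have hne' : b₁.1 ≠ b₂.1 := fun h' => hne (Subtype.ext h')
      have hsubA : ({a₀} : Set X) ⊆ A := by intro x hx; rw [hx]; exact ha₀
      have hsubB : ({b₁.1, b₂.1} : Set X) ⊆ B := by
        intro x hx
        rcases hx with h | h <;> rw [h]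
        exacts [b₁.2, b₂.2]
      have hdisj' : Disjoint ({a₀} : Set X) ({b₁.1, b₂.1} : Set X) := hdisj.mono hsubA hsubB
      have hpA : Proximinal d ({a₀} : Set X) := finite_proximinal hnn (Set.toFinite _) ⟨a₀, rfl⟩
      have hpB : Proximinal d ({b₁.1, b₂.1} : Set X) := finite_proximinal hnn (Set.toFinite _) ⟨b₁.1, Or.inl rfl⟩
      have hset : {r | ∃ a ∈ ({a₀} : Set X), ∃ b ∈ ({b₁.1, b₂.1} : Set X), d a b = r} = {d a₀ b₁.1} := by
        ext r
        constructor
        · rintro ⟨a, rfl, b, (rfl | rfl), rfl⟩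
          · rfl
          · exact h.symm
        · rintro rfl
          exact ⟨a₀, rfl, b₁.1, Or.inl rfl, rfl⟩
      have hsd : sDist d ({a₀} : Set X) ({b₁.1, b₂.1} : Set X) = d a₀ b₁.1 := by
        rw [sDist, hset, csInf_singleton]
      have := hX _ _ hdisj' hpA hpB a₀ rfl b₁.1 (Or.inl rfl) a₀ rfl b₂.1 (Or.inr rfl)
        (by rw [hsd]) (by rw [hsd]; exact h.symm)
      exact hne' this.2
    have hcA : Cardinal.mk ↥A ≤ Cardinal.continuum := by
      have : Function.Injective (fun a : ↥A => (ULift.up (d a.1 b₀) : ULift.{u} ℝ)) :=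
        fun a₁ a₂ h => hinjA (congrArg ULift.down h)
      calc Cardinal.mk ↥A ≤ Cardinal.mk (ULift.{u} ℝ) := Cardinal.mk_le_of_injective this
        _ = Cardinal.lift.{u} (Cardinal.mk ℝ) := Cardinal.mk_uLift ℝ
        _ = Cardinal.continuum := by rw [Cardinal.mk_real, Cardinal.lift_continuum]
    have hcB : Cardinal.mk ↥B ≤ Cardinal.continuum := by
      have : Function.Injective (fun b : ↥B => (ULift.up (d a₀ b.1) : ULift.{u} ℝ)) :=
        fun b₁ b₂ h => hinjB (congrArg ULift.down h)
      calc Cardinal.mk ↥B ≤ Cardinal.mk (ULift.{u} ℝ) := Cardinal.mk_le_of_injective this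
        _ = Cardinal.lift.{u} (Cardinal.mk ℝ) := Cardinal.mk_uLift ℝ
        _ = Cardinal.continuum := by rw [Cardinal.mk_real, Cardinal.lift_continuum]
    calc Cardinal.mk ↥(A ∪ B) ≤ Cardinal.mk ↥A + Cardinal.mk ↥B := Cardinal.mk_union_le A B
      _ ≤ Cardinal.continuum + Cardinal.continuum := add_le_add hcA hcB
      _ = Cardinal.continuum := Cardinal.add_eq_self Cardinal.aleph0_le_continuum
  · intro hno
    constructor
    · intro hAfin
      obtain ⟨a, ha, b, hb, he⟩ := exists_edge hnn hAfin ⟨a₀, ha₀⟩ ⟨b₀, hb₀⟩ hB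
      exact hno a ha b hb he
    · intro hBfin
      have hnn' : ∀ x y, 0 ≤ (fun x y => d y x) x y := fun x y => hnn y x
      have hA' : Proximinal (fun x y => d y x) A := by
        intro x
        obtain ⟨a, ha, hda⟩ := hA x
        refine ⟨a, ha, ?_⟩
        have hseteq : {r | ∃ s ∈ A, d s x = r} = {r | ∃ s ∈ A, d x s = r} := by
          ext r
          constructor <;> (rintro ⟨s, hs, rfl⟩; exact ⟨s, hs, hsymm _ _⟩)
        show d a x = sInf {r | ∃ s ∈ A, d s x = r}
        rw [hseteq, hsymm a x]
        exact hda
      obtain ⟨b, hb, a, ha, he⟩ := exists_edge hnn' hBfin ⟨b₀, hb₀⟩ ⟨a₀, ha₀⟩ hA'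
      have hsd : sDist (fun x y => d y x) B A = sDist d A B := by
        unfold sDist
        congr 1
        ext r
        constructor
        · rintro ⟨b', hb', a', ha', rfl⟩; exact ⟨a', ha', b', hb', rfl⟩
        · rintro ⟨a', ha', b', hb', rfl⟩; exact ⟨b', hb', a', ha', rfl⟩
      exact hno a ha b hb (by simpa [hsd] using he)
end

section
/- Let G be a bipartite graph with fixed parts A and B such that G has at most one edge, the cardinality of the vertex set of G is at most the cardinality 𝔠 of the continuum, and if G has no edges then both A and B are infinite. Then there exists a strongly rigid metric d on X = A ∪ B such that A and B are disjoint proximinal subsets of (X,d) and, for all a ∈ A and b ∈ B, {a,b} is an edge of G if and only if d(a,b) = dist(A,B). -/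
open Set

universe u v

open Cardinal in
lemma exists_pair_inj {V : Type u} (hcard : Cardinal.mk V ≤ Cardinal.continuum) :
    ∃ c : V → V → ℝ, (∀ x y, c x y = c y x) ∧ (∀ x y, 0 < c x y ∧ c x y < 1) ∧
      ∀ x y u v : V, c x y = c u v → ({x, y} : Set V) = {u, v} := by
  have h1 : #(Sym2 V) ≤ Cardinal.continuum := by
    calc #(Sym2 V) ≤ #(V × V) :=
          Cardinal.mk_le_of_surjective (f := Function.uncurry (Sym2.mk (α := V)))
            (fun z => Sym2.ind (f := fun z => ∃ p : V × V, Function.uncurry Sym2.mk p = z) (fun a b => ⟨(a, b), rfl⟩) z)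
    _ = #V * #V := by simp [Cardinal.mk_prod]
    _ ≤ Cardinal.continuum * Cardinal.continuum := mul_le_mul' hcard hcard
    _ = Cardinal.continuum := Cardinal.continuum_mul_self
  have h2 : #(Sym2 V) ≤ Cardinal.lift.{u} #(Set.Ioo (0:ℝ) 1) := by
    rw [Cardinal.mk_Ioo_real (by norm_num : (0:ℝ) < 1), Cardinal.lift_continuum]
    exact h1
  have h3 : Cardinal.lift.{0} #(Sym2 V) ≤ Cardinal.lift.{u} #(Set.Ioo (0:ℝ) 1) := by
    rw [Cardinal.lift_uzero]; exact h2
  obtain ⟨e⟩ := Cardinal.lift_mk_le'.mp h3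
  refine ⟨fun x y => (e s(x, y) : ℝ), fun x y => by simp [Sym2.eq_swap], fun x y => (e s(x,y)).2, ?_⟩
  intro x y u v h
  have : s(x, y) = s(u, v) := e.injective (Subtype.ext h)
  rcases Sym2.eq_iff.mp this with ⟨rfl, rfl⟩ | ⟨rfl, rfl⟩
  · rfl
  · exact Set.pair_comm x y

section Helpers

variable {V : Type u} {d : V → V → ℝ}

lemma isMetric_of (h0 : ∀ x, d x x = 0) (hsym : ∀ x y, d x y = d y x)
    (hlb : ∀ x y, x ≠ y → 1 ≤ d x y) (hub : ∀ x y, x ≠ y → d x y ≤ 2) :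
    IsMetricD d := by
  have hnn : ∀ x y, 0 ≤ d x y := by
    intro x y
    by_cases h : x = y
    · rw [h, h0]
    · linarith [hlb x y h]
  refine ⟨⟨hnn, hsym, ?_⟩, ?_⟩
  · intro x y
    constructor
    · intro h
      by_contra hne
      have := hlb x y hne
      linarith
    · rintro rfl; exact h0 x
  · intro x y z
    by_cases hxy : x = y
    · rw [hxy, h0]; linarith [hnn y z, hnn z y]
    by_cases hxz : x = z
    · rw [hxz, h0]; linarith [hnn z y]
    by_cases hzy : z = y
    · rw [hzy, h0]; linarith [hnn x y]
    · linarith [hub x y hxy, hlb x z hxz, hlb z y hzy]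

lemma rigid_of (h0 : ∀ x, d x x = 0) (hlb : ∀ x y, x ≠ y → 1 ≤ d x y)
    (hinj : ∀ x y u v : V, x ≠ y → u ≠ v → d x y = d u v → ({x, y} : Set V) = {u, v}) :
    StronglyRigid d := by
  intro x y u v hxy h
  by_cases huv : u = v
  · exfalso
    rw [huv, h0] at h
    linarith [hlb x y hxy]
  · exact hinj x y u v hxy huv h

lemma pdist_eq (hnn : ∀ x y, 0 ≤ d x y) {A : Set V} {x a : V} (ha : a ∈ A)
    (hmin : ∀ a' ∈ A, d x a ≤ d x a') : d x a = pDist d x A := by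
  refine le_antisymm (le_csInf ⟨d x a, a, ha, rfl⟩ ?_) (csInf_le ⟨0, ?_⟩ ⟨a, ha, rfl⟩)
  · rintro r ⟨a', ha', rfl⟩
    exact hmin a' ha'
  · rintro r ⟨a', _, rfl⟩
    exact hnn x a'

lemma sdist_eq {A B : Set V} {a0 b0 : V} {v : ℝ} (ha0 : a0 ∈ A) (hb0 : b0 ∈ B)
    (hv : d a0 b0 = v) (hlb : ∀ a ∈ A, ∀ b ∈ B, v ≤ d a b) : sDist d A B = v := by
  refine le_antisymm (csInf_le ⟨v, ?_⟩ ⟨a0, ha0, b0, hb0, hv⟩)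
    (le_csInf ⟨v, a0, ha0, b0, hb0, hv⟩ ?_) <;>
  · rintro r ⟨a, ha, b, hb, rfl⟩
    exact hlb a ha b hb

end Helpers

set_option maxHeartbeats 1000000 in
lemma case_edge {V : Type u} (A B : Set V) (hdisj : Disjoint A B) (hcover : A ∪ B = univ)
    (c : V → V → ℝ) (hcsym : ∀ x y, c x y = c y x)
    (hcb : ∀ x y, 0 < c x y ∧ c x y < 1)
    (hcinj : ∀ x y u v : V, c x y = c u v → ({x, y} : Set V) = {u, v})
    (a0 b0 : V) (ha0 : a0 ∈ A) (hb0 : b0 ∈ B) :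
    ∃ d : V → V → ℝ, IsMetricD d ∧ StronglyRigid d ∧ Proximinal d A ∧ Proximinal d B ∧
      sDist d A B = 1 ∧ ∀ a ∈ A, ∀ b ∈ B, (d a b = 1 ↔ a = a0 ∧ b = b0) := by
  classical
  have hAB : ∀ z, z ∈ A → z ∈ B → False := fun z hzA hzB =>
    Set.disjoint_left.mp hdisj hzA hzB
  have hab0 : a0 ≠ b0 := fun h => hAB a0 ha0 (h ▸ hb0)
  obtain ⟨d, hval⟩ : ∃ d : V → V → ℝ, ∀ x y, d x y =
      if x = y then 0
      else if (x = a0 ∧ y = b0) ∨ (x = b0 ∧ y = a0) then 1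
      else if (x = a0 ∧ y ∈ B) ∨ (y = a0 ∧ x ∈ B) then 1 + c x y / 10
      else if (x = b0 ∧ y ∈ A) ∨ (y = b0 ∧ x ∈ A) then 1.2 + c x y / 10
      else 1.5 + c x y / 10 := ⟨_, fun x y => rfl⟩
  have h0 : ∀ x, d x x = 0 := by intro x; rw [hval, if_pos rfl]
  have hcond1 : ∀ x y : V, ((x = a0 ∧ y = b0) ∨ (x = b0 ∧ y = a0)) ↔
      ((y = a0 ∧ x = b0) ∨ (y = b0 ∧ x = a0)) := by tauto
  have hcond2 : ∀ x y : V, ((x = a0 ∧ y ∈ B) ∨ (y = a0 ∧ x ∈ B)) ↔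
      ((y = a0 ∧ x ∈ B) ∨ (x = a0 ∧ y ∈ B)) := by tauto
  have hcond3 : ∀ x y : V, ((x = b0 ∧ y ∈ A) ∨ (y = b0 ∧ x ∈ A)) ↔
      ((y = b0 ∧ x ∈ A) ∨ (x = b0 ∧ y ∈ A)) := by tauto
  have hsym : ∀ x y, d x y = d y x := by
    intro x y
    rw [hval x y, hval y x, hcsym x y]
    exact if_congr eq_comm rfl (if_congr (hcond1 x y) rfl
      (if_congr (hcond2 x y) rfl (if_congr (hcond3 x y) rfl rfl)))
  have hlb : ∀ x y, x ≠ y → 1 ≤ d x y := by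
    intro x y hxy
    rw [hval, if_neg hxy]
    have := (hcb x y).1
    split_ifs <;> linarith
  have hub : ∀ x y, x ≠ y → d x y ≤ 2 := by
    intro x y hxy
    rw [hval, if_neg hxy]
    have := (hcb x y).2
    split_ifs <;> linarith
  -- branch-range facts
  have hb2 : ∀ x y, ((x = a0 ∧ y ∈ B) ∨ (y = a0 ∧ x ∈ B)) → ¬({x,y} : Set V) = {a0,b0} →
      1 < d x y ∧ d x y < 1.1 := by
    intro x y hc2 hne
    have hxy : x ≠ y := by
      rintro rfl
      rcases hc2 with ⟨rfl, hxB⟩ | ⟨rfl, hxB⟩ <;> exact hAB _ ha0 hxB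
    have hc1 : ¬((x = a0 ∧ y = b0) ∨ (x = b0 ∧ y = a0)) := by
      rintro (⟨rfl, rfl⟩ | ⟨rfl, rfl⟩)
      · exact hne rfl
      · exact hne (Set.pair_comm _ _)
    rw [hval, if_neg hxy, if_neg hc1, if_pos hc2]
    have := hcb x y
    constructor <;> linarith [this.1, this.2]
  have hb3 : ∀ x y, ¬((x = a0 ∧ y = b0) ∨ (x = b0 ∧ y = a0)) →
      ¬((x = a0 ∧ y ∈ B) ∨ (y = a0 ∧ x ∈ B)) →
      ((x = b0 ∧ y ∈ A) ∨ (y = b0 ∧ x ∈ A)) →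
      1.2 < d x y ∧ d x y < 1.3 := by
    intro x y hc1 hc2 hc3
    have hxy : x ≠ y := by
      rintro rfl
      rcases hc3 with ⟨rfl, hxA⟩ | ⟨rfl, hxA⟩ <;> exact hAB _ hxA hb0
    rw [hval, if_neg hxy, if_neg hc1, if_neg hc2, if_pos hc3]
    have := hcb x y
    constructor <;> linarith [this.1, this.2]
  have hb4 : ∀ x y, x ≠ y → ¬((x = a0 ∧ y = b0) ∨ (x = b0 ∧ y = a0)) →
      ¬((x = a0 ∧ y ∈ B) ∨ (y = a0 ∧ x ∈ B)) →
      ¬((x = b0 ∧ y ∈ A) ∨ (y = b0 ∧ x ∈ A)) →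
      1.5 < d x y ∧ d x y < 1.6 := by
    intro x y hxy hc1 hc2 hc3
    rw [hval, if_neg hxy, if_neg hc1, if_neg hc2, if_neg hc3]
    have := hcb x y
    constructor <;> linarith [this.1, this.2]
  have hd1 : d a0 b0 = 1 := by
    rw [hval, if_neg hab0, if_pos (Or.inl ⟨rfl, rfl⟩)]
  -- injectivity on pairs
  have hinj : ∀ x y u v : V, x ≠ y → u ≠ v → d x y = d u v → ({x, y} : Set V) = {u, v} := by
    intro x y u v hxy huv h
    rw [hval, hval, if_neg hxy, if_neg huv] at h
    split_ifs at h with h1 h1' h2 h2' h2' h3 h3' h3' h3'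
    all_goals try (exfalso; have h5 := hcb x y; have h6 := hcb u v; linarith [h5.1, h5.2, h6.1, h6.2])
    -- remaining: matching branches
    · -- both branch 1
      rcases h1 with ⟨rfl, rfl⟩ | ⟨rfl, rfl⟩ <;> rcases h1' with ⟨rfl, rfl⟩ | ⟨rfl, rfl⟩ <;>
        first | rfl | exact Set.pair_comm _ _
    all_goals
      exact hcinj x y u v (by linarith)
  have hmet := isMetric_of h0 hsym hlb hub
  have hnn : ∀ x y, 0 ≤ d x y := hmet.1.1
  have hBmem : ∀ x : V, x ∉ A → x ∈ B := by
    intro x hx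
    have h : x ∈ A ∪ B := by rw [hcover]; trivial
    rcases h with h | h
    · exact absurd h hx
    · exact h
  have hAmem : ∀ x : V, x ∉ B → x ∈ A := by
    intro x hx
    have h : x ∈ A ∪ B := by rw [hcover]; trivial
    rcases h with h | h
    · exact h
    · exact absurd h hx
  refine ⟨d, hmet, rigid_of h0 hlb hinj, ?_, ?_, ?_, ?_⟩
  · -- Proximinal A
    intro x
    by_cases hx : x ∈ A
    · exact ⟨x, hx, pdist_eq hnn hx (fun a' _ => by rw [h0]; exact hnn x a')⟩
    have hxB : x ∈ B := hBmem x hx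
    by_cases hxb0 : x = b0
    · refine ⟨a0, ha0, pdist_eq hnn ha0 ?_⟩
      intro a' ha'
      rw [hxb0, hsym b0 a0, hd1]
      exact hlb b0 a' (fun h => hAB a' ha' (h ▸ hb0))
    · refine ⟨a0, ha0, pdist_eq hnn ha0 ?_⟩
      intro a' ha'
      have hxa0 : x ≠ a0 := fun h => hAB x (h ▸ ha0) hxB
      have hxne : ({x, a0} : Set V) ≠ {a0, b0} := by
        intro h
        have : x ∈ ({a0, b0} : Set V) := h ▸ Set.mem_insert x {a0}
        rcases this with h' | h'
        · exact hxa0 h'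
        · exact hxb0 h'
      have h2 := hb2 x a0 (Or.inr ⟨rfl, hxB⟩) hxne
      by_cases ha0' : a' = a0
      · rw [ha0']
      · have hxa' : x ≠ a' := fun h => hAB a' ha' (h ▸ hxB)
        have h4 := hb4 x a' hxa'
          (by rintro (⟨h, -⟩ | ⟨h, -⟩) <;> [exact hxa0 h; exact hxb0 h])
          (by rintro (⟨h, -⟩ | ⟨h, -⟩) <;> [exact hxa0 h; exact ha0' h])
          (by rintro (⟨h, -⟩ | ⟨h, -⟩) <;> [exact hxb0 h; exact hAB a' ha' (h ▸ hb0)])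
        linarith [h2.2, h4.1]
  · -- Proximinal B
    intro x
    by_cases hx : x ∈ B
    · exact ⟨x, hx, pdist_eq hnn hx (fun a' _ => by rw [h0]; exact hnn x a')⟩
    have hxA : x ∈ A := hAmem x hx
    by_cases hxa0 : x = a0
    · refine ⟨b0, hb0, pdist_eq hnn hb0 ?_⟩
      intro b' hb'
      rw [hxa0, hd1]
      exact hlb a0 b' (fun h => hAB a0 ha0 (h ▸ hb'))
    · refine ⟨b0, hb0, pdist_eq hnn hb0 ?_⟩
      intro b' hb'
      have hxb0 : x ≠ b0 := fun h => hAB x hxA (h ▸ hb0)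
      have h3 := hb3 x b0
        (by rintro (⟨h, -⟩ | ⟨h, -⟩) <;> [exact hxa0 h; exact hxb0 h])
        (by rintro (⟨h, -⟩ | ⟨h, -⟩) <;> [exact hxa0 h; exact hab0 h.symm])
        (Or.inr ⟨rfl, hxA⟩)
      by_cases hb0' : b' = b0
      · rw [hb0']
      · have hxb' : x ≠ b' := fun h => hAB x hxA (h ▸ hb')
        have h4 := hb4 x b' hxb'
          (by rintro (⟨h, -⟩ | ⟨h, -⟩) <;> [exact hxa0 h; exact hxb0 h])
          (by rintro (⟨h, -⟩ | ⟨h, -⟩) <;> [exact hxa0 h; exact hAB b' (h ▸ ha0) hb'])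
          (by rintro (⟨h, -⟩ | ⟨h, -⟩) <;> [exact hxb0 h; exact hb0' h])
        linarith [h3.2, h4.1]
  · exact sdist_eq ha0 hb0 hd1
      (fun a ha b hb => hlb a b (fun h => hAB a ha (h ▸ hb)))
  · intro a ha b hb
    constructor
    · intro h
      have hab : a ≠ b := fun h' => hAB a ha (h' ▸ hb)
      have hpair := hinj a b a0 b0 hab hab0 (h.trans hd1.symm)
      have haa : a ∈ ({a0, b0} : Set V) := hpair ▸ Set.mem_insert a {b}
      have hbb : b ∈ ({a0, b0} : Set V) := hpair ▸ Set.mem_insert_of_mem a rfl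
      constructor
      · rcases haa with h' | h'
        · exact h'
        · exact (hAB a ha (by rw [show a = b0 from h']; exact hb0)).elim
      · rcases hbb with h' | h'
        · exact (hAB b (by rw [show b = a0 from h']; exact ha0) hb).elim
        · exact h'
    · rintro ⟨rfl, rfl⟩
      exact hd1

set_option maxHeartbeats 1000000 in
lemma case_empty {V : Type u} (A B : Set V) (hdisj : Disjoint A B) (hcover : A ∪ B = univ)
    (c : V → V → ℝ) (hcsym : ∀ x y, c x y = c y x)
    (hcb : ∀ x y, 0 < c x y ∧ c x y < 1)
    (hcinj : ∀ x y u v : V, c x y = c u v → ({x, y} : Set V) = {u, v})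
    (hAinf : A.Infinite) (hBinf : B.Infinite) :
    ∃ d : V → V → ℝ, IsMetricD d ∧ StronglyRigid d ∧ Proximinal d A ∧ Proximinal d B ∧
      sDist d A B = 1 ∧ ∀ a ∈ A, ∀ b ∈ B, 1 < d a b := by
  classical
  have hAB : ∀ z, z ∈ A → z ∈ B → False := fun z hzA hzB =>
    Set.disjoint_left.mp hdisj hzA hzB
  obtain ⟨eA⟩ : Nonempty (ℕ ↪ A) := ⟨hAinf.natEmbedding⟩
  obtain ⟨eB⟩ : Nonempty (ℕ ↪ B) := ⟨hBinf.natEmbedding⟩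
  set α : ℕ → V := fun n => (eA n : V) with hα_def
  set β : ℕ → V := fun n => (eB n : V) with hβ_def
  have hα : ∀ n, α n ∈ A := fun n => (eA n).2
  have hβ : ∀ n, β n ∈ B := fun n => (eB n).2
  have hαinj : Function.Injective α := fun m n h => eA.injective (Subtype.ext h)
  have hβinj : Function.Injective β := fun m n h => eB.injective (Subtype.ext h)
  have hαβ : ∀ m n, α m ≠ β n := fun m n h => hAB _ (hα m) (h ▸ hβ n)
  -- the sequence-pair condition
  have huniq : ∀ (x y : V) (n m : ℕ),
      ((x = α n ∧ y = β n) ∨ (x = β n ∧ y = α n)) →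
      ((x = α m ∧ y = β m) ∨ (x = β m ∧ y = α m)) → n = m := by
    rintro x y n m (⟨rfl, rfl⟩ | ⟨rfl, rfl⟩) (⟨h1, h2⟩ | ⟨h1, h2⟩)
    · exact hαinj h1
    · exact absurd h1 (hαβ n m)
    · exact absurd h1 (fun h => hAB _ (hα m) (h.symm ▸ hβ n))
    · exact hβinj h1
  have haux : ∀ k : ℕ, 0 < 1 / ((k : ℝ) + 3) ∧ 1 / ((k : ℝ) + 3) ≤ 1 / 3 := by
    intro k
    have h1 : (0:ℝ) < (k : ℝ) + 3 := by positivity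
    constructor
    · positivity
    · rw [div_le_div_iff₀ h1 (by norm_num)]
      have := Nat.cast_nonneg (α := ℝ) k
      linarith
  obtain ⟨d, hval⟩ : ∃ d : V → V → ℝ, ∀ x y, d x y =
      if x = y then 0
      else if h : ∃ n, (x = α n ∧ y = β n) ∨ (x = β n ∧ y = α n) then
        1 + 1 / ((Nat.find h : ℝ) + 3)
      else if (x = β 0 ∧ y ∈ A) ∨ (y = β 0 ∧ x ∈ A) then 1.4 + c x y / 100
      else if (x = α 0 ∧ y ∈ B) ∨ (y = α 0 ∧ x ∈ B) then 1.42 + c x y / 100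
      else 1.6 + c x y / 100 := ⟨_, fun x y => rfl⟩
  have hseqval : ∀ (x y : V) (n : ℕ), ((x = α n ∧ y = β n) ∨ (x = β n ∧ y = α n)) →
      d x y = 1 + 1 / ((n : ℝ) + 3) := by
    intro x y n hn
    have hxy : x ≠ y := by
      rcases hn with ⟨rfl, rfl⟩ | ⟨rfl, rfl⟩
      · exact hαβ n n
      · exact (hαβ n n).symm
    have hex : ∃ m, (x = α m ∧ y = β m) ∨ (x = β m ∧ y = α m) := ⟨n, hn⟩
    rw [hval, if_neg hxy, dif_pos hex, huniq x y (Nat.find hex) n (Nat.find_spec hex) hn]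
  -- the four-way value classification
  have htri : ∀ x y : V, x ≠ y →
      (∃ n, ((x = α n ∧ y = β n) ∨ (x = β n ∧ y = α n)) ∧ d x y = 1 + 1 / ((n : ℝ) + 3)) ∨
      (¬(∃ n, (x = α n ∧ y = β n) ∨ (x = β n ∧ y = α n)) ∧
        ((x = β 0 ∧ y ∈ A) ∨ (y = β 0 ∧ x ∈ A)) ∧ d x y = 1.4 + c x y / 100) ∨
      (¬(∃ n, (x = α n ∧ y = β n) ∨ (x = β n ∧ y = α n)) ∧
        ¬((x = β 0 ∧ y ∈ A) ∨ (y = β 0 ∧ x ∈ A)) ∧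
        ((x = α 0 ∧ y ∈ B) ∨ (y = α 0 ∧ x ∈ B)) ∧ d x y = 1.42 + c x y / 100) ∨
      (¬(∃ n, (x = α n ∧ y = β n) ∨ (x = β n ∧ y = α n)) ∧
        ¬((x = β 0 ∧ y ∈ A) ∨ (y = β 0 ∧ x ∈ A)) ∧
        ¬((x = α 0 ∧ y ∈ B) ∨ (y = α 0 ∧ x ∈ B)) ∧ d x y = 1.6 + c x y / 100) := by
    intro x y hxy
    by_cases hs : ∃ n, (x = α n ∧ y = β n) ∨ (x = β n ∧ y = α n)
    · obtain ⟨n, hn⟩ := hs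
      exact Or.inl ⟨n, hn, hseqval x y n hn⟩
    by_cases h2 : (x = β 0 ∧ y ∈ A) ∨ (y = β 0 ∧ x ∈ A)
    · exact Or.inr (Or.inl ⟨hs, h2, by rw [hval, if_neg hxy, dif_neg hs, if_pos h2]⟩)
    by_cases h3 : (x = α 0 ∧ y ∈ B) ∨ (y = α 0 ∧ x ∈ B)
    · exact Or.inr (Or.inr (Or.inl ⟨hs, h2, h3, by
        rw [hval, if_neg hxy, dif_neg hs, if_neg h2, if_pos h3]⟩))
    · exact Or.inr (Or.inr (Or.inr ⟨hs, h2, h3, by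
        rw [hval, if_neg hxy, dif_neg hs, if_neg h2, if_neg h3]⟩))
  have h0 : ∀ x, d x x = 0 := by intro x; rw [hval, if_pos rfl]
  have hswap : ∀ x y : V, (∃ n, (x = α n ∧ y = β n) ∨ (x = β n ∧ y = α n)) →
      (∃ n, (y = α n ∧ x = β n) ∨ (y = β n ∧ x = α n)) := by
    rintro x y ⟨n, ⟨h1, h2⟩ | ⟨h1, h2⟩⟩
    · exact ⟨n, Or.inr ⟨h2, h1⟩⟩
    · exact ⟨n, Or.inl ⟨h2, h1⟩⟩
  have hsym : ∀ x y, d x y = d y x := by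
    intro x y
    by_cases hxy : x = y
    · rw [hxy]
    have hyx : y ≠ x := Ne.symm hxy
    by_cases hs : ∃ n, (x = α n ∧ y = β n) ∨ (x = β n ∧ y = α n)
    · obtain ⟨n, hn⟩ := hs
      rw [hseqval x y n hn, hseqval y x n (by tauto)]
    · have hs' : ¬∃ n, (y = α n ∧ x = β n) ∨ (y = β n ∧ x = α n) :=
        fun h => hs (hswap y x h)
      rw [hval x y, hval y x, if_neg hxy, if_neg hyx, dif_neg hs, dif_neg hs',
        hcsym x y]
      exact if_congr (by tauto) rfl (if_congr (by tauto) rfl rfl)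
  have hlb : ∀ x y, x ≠ y → 1 ≤ d x y := by
    intro x y hxy
    rcases htri x y hxy with ⟨n, -, hv⟩ | ⟨-, -, hv⟩ | ⟨-, -, -, hv⟩ | ⟨-, -, -, hv⟩ <;>
      rw [hv]
    · linarith [(haux n).1]
    all_goals linarith [(hcb x y).1]
  have hub : ∀ x y, x ≠ y → d x y ≤ 2 := by
    intro x y hxy
    rcases htri x y hxy with ⟨n, -, hv⟩ | ⟨-, -, hv⟩ | ⟨-, -, -, hv⟩ | ⟨-, -, -, hv⟩ <;>
      rw [hv]
    · linarith [(haux n).2]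
    all_goals linarith [(hcb x y).2]
  have hinj : ∀ x y u v : V, x ≠ y → u ≠ v → d x y = d u v → ({x, y} : Set V) = {u, v} := by
    intro x y u v hxy huv h
    rcases htri x y hxy with ⟨n, hn, hv⟩ | ⟨-, -, hv⟩ | ⟨-, -, -, hv⟩ | ⟨-, -, -, hv⟩ <;>
      rcases htri u v huv with ⟨m, hm, hv'⟩ | ⟨-, -, hv'⟩ | ⟨-, -, -, hv'⟩ | ⟨-, -, -, hv'⟩ <;>
      rw [hv, hv'] at h
    -- kill the 12 mismatched cases
    all_goals try (exfalso; first | linarith [(haux n).1, (haux n).2, (hcb u v).1, (hcb u v).2] | linarith [(haux m).1, (haux m).2, (hcb x y).1, (hcb x y).2] | linarith [(hcb x y).1, (hcb x y).2, (hcb u v).1, (hcb u v).2])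
    -- seq-seq
    · have p1 : (0:ℝ) < (n : ℝ) + 3 := by positivity
      have p2 : (0:ℝ) < (m : ℝ) + 3 := by positivity
      have h4 : 1 / ((n : ℝ) + 3) = 1 / ((m : ℝ) + 3) := by linarith
      rw [div_eq_div_iff p1.ne' p2.ne'] at h4
      have hnm : n = m := Nat.cast_injective (by linarith : (n : ℝ) = (m : ℝ))
      subst hnm
      rcases hn with ⟨rfl, rfl⟩ | ⟨rfl, rfl⟩ <;> rcases hm with ⟨h5, h6⟩ | ⟨h5, h6⟩ <;>
        rw [h5, h6] <;> first | rfl | exact Set.pair_comm _ _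
    all_goals exact hcinj x y u v (by linarith)
  have hmet := isMetric_of h0 hsym hlb hub
  have hnn : ∀ x y, 0 ≤ d x y := hmet.1.1
  have hBmem : ∀ x : V, x ∉ A → x ∈ B := by
    intro x hx
    have h : x ∈ A ∪ B := by rw [hcover]; trivial
    rcases h with h | h
    · exact absurd h hx
    · exact h
  have hAmem : ∀ x : V, x ∉ B → x ∈ A := by
    intro x hx
    have h : x ∈ A ∪ B := by rw [hcover]; trivial
    rcases h with h | h
    · exact h
    · exact absurd h hx
  have hfar : ∀ x y : V, x ≠ y → ¬(∃ n, (x = α n ∧ y = β n) ∨ (x = β n ∧ y = α n)) →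
      1.4 ≤ d x y := by
    intro x y hxy hs
    rcases htri x y hxy with ⟨n, hn, -⟩ | ⟨-, -, hv⟩ | ⟨-, -, -, hv⟩ | ⟨-, -, -, hv⟩
    · exact absurd ⟨n, hn⟩ hs
    all_goals (rw [hv]; linarith [(hcb x y).1])
  have hgt : ∀ a ∈ A, ∀ b ∈ B, 1 < d a b := by
    intro a ha b hb
    have hab : a ≠ b := fun h => hAB a ha (h ▸ hb)
    rcases htri a b hab with ⟨n, -, hv⟩ | ⟨-, -, hv⟩ | ⟨-, -, -, hv⟩ | ⟨-, -, -, hv⟩ <;>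
      rw [hv]
    · linarith [(haux n).1]
    all_goals linarith [(hcb a b).1]
  refine ⟨d, hmet, rigid_of h0 hlb hinj, ?_, ?_, ?_, hgt⟩
  · -- Proximinal A
    intro x
    by_cases hx : x ∈ A
    · exact ⟨x, hx, pdist_eq hnn hx (fun a' _ => by rw [h0]; exact hnn x a')⟩
    have hxB : x ∈ B := hBmem x hx
    by_cases hxr : ∃ n, x = β n
    · obtain ⟨n, rfl⟩ := hxr
      refine ⟨α n, hα n, pdist_eq hnn (hα n) ?_⟩
      intro a' ha'
      have hder : d (β n) (α n) = 1 + 1 / ((n : ℝ) + 3) :=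
        hseqval _ _ n (Or.inr ⟨rfl, rfl⟩)
      by_cases he : a' = α n
      · rw [he]
      · have hne : β n ≠ a' := fun h => hAB a' ha' (h ▸ hβ n)
        have hs : ¬∃ m, (β n = α m ∧ a' = β m) ∨ (β n = β m ∧ a' = α m) := by
          rintro ⟨m, ⟨h1, -⟩ | ⟨h1, h2⟩⟩
          · exact hαβ m n h1.symm
          · exact he (h2.trans (congrArg α (hβinj h1).symm))
        have := hfar (β n) a' hne hs
        rw [hder]
        linarith [(haux n).2]
    · refine ⟨α 0, hα 0, pdist_eq hnn (hα 0) ?_⟩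
      intro a' ha'
      have hxa0 : x ≠ α 0 := fun h => hAB x (h ▸ hα 0) hxB
      have hs0 : ¬∃ m, (x = α m ∧ α 0 = β m) ∨ (x = β m ∧ α 0 = α m) := by
        rintro ⟨m, ⟨-, h2⟩ | ⟨h1, -⟩⟩
        · exact hαβ 0 m h2
        · exact hxr ⟨m, h1⟩
      have hc2 : ¬((x = β 0 ∧ α 0 ∈ A) ∨ (α 0 = β 0 ∧ x ∈ A)) := by
        rintro (⟨h1, -⟩ | ⟨h1, -⟩)
        · exact hxr ⟨0, h1⟩
        · exact hαβ 0 0 h1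
      have hv0 : d x (α 0) = 1.42 + c x (α 0) / 100 := by
        rw [hval, if_neg hxa0, dif_neg hs0, if_neg hc2, if_pos (Or.inr ⟨rfl, hxB⟩)]
      by_cases he : a' = α 0
      · rw [he]
      · have hxa' : x ≠ a' := fun h => hAB a' ha' (h ▸ hxB)
        have hs' : ¬∃ m, (x = α m ∧ a' = β m) ∨ (x = β m ∧ a' = α m) := by
          rintro ⟨m, ⟨h1, -⟩ | ⟨h1, -⟩⟩
          · exact hAB x (by rw [h1]; exact hα m) hxB
          · exact hxr ⟨m, h1⟩
        have hc2' : ¬((x = β 0 ∧ a' ∈ A) ∨ (a' = β 0 ∧ x ∈ A)) := by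
          rintro (⟨h1, -⟩ | ⟨h1, -⟩)
          · exact hxr ⟨0, h1⟩
          · exact hAB a' ha' (by rw [h1]; exact hβ 0)
        have hc3' : ¬((x = α 0 ∧ a' ∈ B) ∨ (a' = α 0 ∧ x ∈ B)) := by
          rintro (⟨h1, -⟩ | ⟨h1, -⟩)
          · exact hxa0 h1
          · exact he h1
        have hv' : d x a' = 1.6 + c x a' / 100 := by
          rw [hval, if_neg hxa', dif_neg hs', if_neg hc2', if_neg hc3']
        rw [hv0, hv']
        linarith [(hcb x (α 0)).2, (hcb x a').1]
  · -- Proximinal B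
    intro x
    by_cases hx : x ∈ B
    · exact ⟨x, hx, pdist_eq hnn hx (fun a' _ => by rw [h0]; exact hnn x a')⟩
    have hxA : x ∈ A := hAmem x hx
    by_cases hxr : ∃ n, x = α n
    · obtain ⟨n, rfl⟩ := hxr
      refine ⟨β n, hβ n, pdist_eq hnn (hβ n) ?_⟩
      intro b' hb'
      have hder : d (α n) (β n) = 1 + 1 / ((n : ℝ) + 3) :=
        hseqval _ _ n (Or.inl ⟨rfl, rfl⟩)
      by_cases he : b' = β n
      · rw [he]
      · have hne : α n ≠ b' := fun h => hAB (α n) (hα n) (h ▸ hb')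
        have hs : ¬∃ m, (α n = α m ∧ b' = β m) ∨ (α n = β m ∧ b' = α m) := by
          rintro ⟨m, ⟨h1, h2⟩ | ⟨h1, -⟩⟩
          · exact he (h2.trans (congrArg β (hαinj h1).symm))
          · exact hαβ n m h1
        have := hfar (α n) b' hne hs
        rw [hder]
        linarith [(haux n).2]
    · refine ⟨β 0, hβ 0, pdist_eq hnn (hβ 0) ?_⟩
      intro b' hb'
      have hxb0 : x ≠ β 0 := fun h => hAB x hxA (h ▸ hβ 0)
      have hs0 : ¬∃ m, (x = α m ∧ β 0 = β m) ∨ (x = β m ∧ β 0 = α m) := by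
        rintro ⟨m, ⟨h1, -⟩ | ⟨h1, -⟩⟩
        · exact hxr ⟨m, h1⟩
        · exact hAB x hxA (by rw [h1]; exact hβ m)
      have hv0 : d x (β 0) = 1.4 + c x (β 0) / 100 := by
        rw [hval, if_neg hxb0, dif_neg hs0, if_pos (Or.inr ⟨rfl, hxA⟩)]
      by_cases he : b' = β 0
      · rw [he]
      · have hxb' : x ≠ b' := fun h => hAB x hxA (h ▸ hb')
        have hs' : ¬∃ m, (x = α m ∧ b' = β m) ∨ (x = β m ∧ b' = α m) := by
          rintro ⟨m, ⟨h1, -⟩ | ⟨h1, -⟩⟩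
          · exact hxr ⟨m, h1⟩
          · exact hAB x hxA (by rw [h1]; exact hβ m)
        have hc2' : ¬((x = β 0 ∧ b' ∈ A) ∨ (b' = β 0 ∧ x ∈ A)) := by
          rintro (⟨h1, -⟩ | ⟨h1, -⟩)
          · exact hxb0 h1
          · exact he h1
        have hc3' : ¬((x = α 0 ∧ b' ∈ B) ∨ (b' = α 0 ∧ x ∈ B)) := by
          rintro (⟨h1, -⟩ | ⟨h1, -⟩)
          · exact hxr ⟨0, h1⟩
          · exact hAB b' (by rw [h1]; exact hα 0) hb'
        have hv' : d x b' = 1.6 + c x b' / 100 := by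
          rw [hval, if_neg hxb', dif_neg hs', if_neg hc2', if_neg hc3']
        rw [hv0, hv']
        linarith [(hcb x (β 0)).2, (hcb x b').1]
  · -- sDist = 1
    have hmem : ∀ n : ℕ, d (α n) (β n) ∈ {r | ∃ a ∈ A, ∃ b ∈ B, d a b = r} :=
      fun n => ⟨α n, hα n, β n, hβ n, rfl⟩
    have hlbS : ∀ r ∈ {r | ∃ a ∈ A, ∃ b ∈ B, d a b = r}, (1:ℝ) ≤ r := by
      rintro r ⟨a, ha, b, hb, rfl⟩
      exact hlb a b (fun h => hAB a ha (h ▸ hb))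
    refine le_antisymm ?_ (le_csInf ⟨_, hmem 0⟩ hlbS)
    show sInf {r | ∃ a ∈ A, ∃ b ∈ B, d a b = r} ≤ 1
    rw [Real.sInf_le_iff ⟨1, hlbS⟩ ⟨_, hmem 0⟩]
    intro ε hε
    obtain ⟨n, hn⟩ := exists_nat_gt (1 / ε)
    refine ⟨d (α n) (β n), hmem n, ?_⟩
    rw [hseqval _ _ n (Or.inl ⟨rfl, rfl⟩)]
    have h1 : 1 < (n : ℝ) * ε := by
      rw [div_lt_iff₀ hε] at hn
      exact hn
    have h2 : (0:ℝ) ≤ (n : ℝ) := Nat.cast_nonneg n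
    have h3 : (0:ℝ) < (n : ℝ) + 3 := by linarith
    have h4 : 1 / ((n : ℝ) + 3) < ε := by
      rw [div_lt_iff₀ h3]
      nlinarith
    linarith

/-- Any bipartite graph with parts `A`, `B`, at most one edge, at most continuum
many vertices, which is infinite on both parts if it is null, is proximinal for some strongly
rigid metric on `X = A ∪ B`. -/
theorem stmt_1 {V : Type u} (A B : Set V) (hAne : A.Nonempty) (hBne : B.Nonempty)
    (hdisj : Disjoint A B) (hcover : A ∪ B = Set.univ)
    (E : Set (V × V)) (hE : E ⊆ A ×ˢ B)
    (hE1 : E.Subsingleton)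
    (hcard : Cardinal.mk V ≤ Cardinal.continuum)
    (hnull : E = ∅ → A.Infinite ∧ B.Infinite) :
    ∃ d : V → V → ℝ, IsMetricD d ∧ StronglyRigid d ∧
      Proximinal d A ∧ Proximinal d B ∧
      ∀ a ∈ A, ∀ b ∈ B, ((a, b) ∈ E ↔ d a b = sDist d A B) := by
  classical
  obtain ⟨c, hcsym, hcb, hcinj⟩ := exists_pair_inj hcard
  rcases E.eq_empty_or_nonempty with hE0 | ⟨⟨a0, b0⟩, hmemE⟩
  · obtain ⟨hAinf, hBinf⟩ := hnull hE0
    obtain ⟨d, hmet, hrig, hPA, hPB, hs, hgt⟩ :=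
      case_empty A B hdisj hcover c hcsym hcb hcinj hAinf hBinf
    refine ⟨d, hmet, hrig, hPA, hPB, ?_⟩
    intro a ha b hb
    constructor
    · intro h
      rw [hE0] at h
      exact absurd h (Set.notMem_empty _)
    · intro h
      exfalso
      rw [hs] at h
      exact (ne_of_gt (hgt a ha b hb)) h
  · have hp := hE hmemE
    obtain ⟨d, hmet, hrig, hPA, hPB, hs, hiff⟩ :=
      case_edge A B hdisj hcover c hcsym hcb hcinj a0 b0 hp.1 hp.2
    refine ⟨d, hmet, hrig, hPA, hPB, ?_⟩
    intro a ha b hb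
    rw [hs]
    constructor
    · intro h
      have heq : (a, b) = (a0, b0) := hE1 h hmemE
      exact (hiff a ha b hb).mpr ⟨congrArg Prod.fst heq, congrArg Prod.snd heq⟩
    · intro h
      obtain ⟨h1, h2⟩ := (hiff a ha b hb).mp h
      rw [h1, h2]
      exact hmemE
end

section
/- The double inclusion SR ⊆ UBPP ⊆ WR holds: every strongly rigid semimetric space belongs to the class UBPP, and every semimetric space belonging to the class UBPP is weakly rigid. -/
open Set

universe u v

lemma ubpp_aux {X : Type u} (d : X → X → ℝ) (hU : UBPP d) {p q r : X}
    (hpq : p ≠ q) (hpr : p ≠ r) (hqr : q ≠ r) (h : d p q = d p r) : False := by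
  have hdisj : Disjoint ({p} : Set X) {q, r} := by
    simp [Set.disjoint_singleton_left, hpq, hpr]
  have hPA : Proximinal d {p} := by
    intro x
    refine ⟨p, rfl, ?_⟩
    have hset : {s | ∃ a ∈ ({p} : Set X), d x a = s} = {d x p} := by
      ext z; simp [eq_comm]
    simp [pDist, hset]
  have hPB : Proximinal d ({q, r} : Set X) := by
    intro x
    have hset : {s | ∃ a ∈ ({q, r} : Set X), d x a = s} = {d x q, d x r} := by
      ext z
      constructor
      · rintro ⟨a, (rfl | rfl), rfl⟩ <;> simp
      · rintro (rfl | rfl) <;> [exact ⟨q, by simp⟩; exact ⟨r, by simp⟩]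
    rw [show pDist d x {q, r} = d x q ⊓ d x r by rw [pDist, hset, csInf_pair]]
    rcases le_total (d x q) (d x r) with h' | h'
    · exact ⟨q, by simp, by simp [inf_eq_left.mpr h']⟩
    · exact ⟨r, by simp, by simp [inf_eq_right.mpr h']⟩
  have hs : sDist d {p} {q, r} = d p q := by
    have hset : {s | ∃ a ∈ ({p} : Set X), ∃ b ∈ ({q, r} : Set X), d a b = s}
        = {d p q, d p r} := by
      ext z
      constructor
      · rintro ⟨a, rfl, b, (rfl | rfl), rfl⟩ <;> simp
      · rintro (rfl | rfl) <;> [exact ⟨p, rfl, q, by simp⟩; exact ⟨p, rfl, r, by simp⟩]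
    rw [sDist, hset, csInf_pair, ← h, inf_idem]
  have := hU {p} {q, r} hdisj hPA hPB p rfl q (by simp) p rfl r (by simp)
    hs.symm (by rw [← h]; exact hs.symm)
  exact hqr this.2

/-- `SR ⊆ UBPP ⊆ WR`. -/
theorem stmt_2 {X : Type u} (d : X → X → ℝ) (hd : IsSemimetric d) :
    (StronglyRigid d → UBPP d) ∧ (UBPP d → WeaklyRigid d) := by
  constructor
  · intro hSR A B hdisj _ _ a₁ ha₁ b₁ hb₁ a₂ ha₂ b₂ hb₂ h₁ h₂
    have hab : a₁ ≠ b₁ := fun h => Set.disjoint_left.mp hdisj ha₁ (h ▸ hb₁)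
    have hset := hSR a₁ b₁ a₂ b₂ hab (h₁.trans h₂.symm)
    have hmem₁ : a₁ ∈ ({a₂, b₂} : Set X) := hset ▸ (by simp : a₁ ∈ ({a₁, b₁} : Set X))
    have hmem₂ : b₁ ∈ ({a₂, b₂} : Set X) := hset ▸ (by simp : b₁ ∈ ({a₁, b₁} : Set X))
    constructor
    · rcases hmem₁ with h | h
      · exact h
      · exact absurd (h ▸ ha₁) (fun hh => Set.disjoint_left.mp hdisj hh hb₂)
    · rcases hmem₂ with h | h
      · exact absurd (h ▸ hb₁) (fun hh => Set.disjoint_left.mp hdisj ha₂ hh)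
      · exact h
  · intro hU S hS x hx y hy u hu v hv hxy hduv
    have huv : u ≠ v := by
      rintro rfl
      exact hxy ((hd.2.2 x y).mp (by rw [hduv, (hd.2.2 u u).mpr rfl]))
    by_contra hne
    by_cases hxu : x = u
    · subst hxu
      have hyv : y ≠ v := fun h => hne (by rw [h])
      exact ubpp_aux d hU hxy huv hyv hduv
    by_cases hxv : x = v
    · subst hxv
      have hyu : y ≠ u := fun h => hne (by rw [h, Set.pair_comm])
      exact ubpp_aux d hU hxy (Ne.symm huv) hyu
        (by rw [hduv, hd.2.1])
    by_cases hyu : y = u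
    · subst hyu
      have hxv' : x ≠ v := fun h => hne (by rw [h, Set.pair_comm])
      exact ubpp_aux d hU (Ne.symm hxy) huv hxv'
        (by rw [hd.2.1, hduv])
    by_cases hyv : y = v
    · subst hyv
      have hxu' : x ≠ u := fun h => hne (by rw [h])
      exact ubpp_aux d hU (Ne.symm hxy) (Ne.symm huv) hxu'
        (by rw [hd.2.1, hduv, hd.2.1])
    · have hsub : ({x, y, u, v} : Set X) ⊆ S := by
        simp [Set.insert_subset_iff, hx, hy, hu, hv]
      have h4 : ({x, y, u, v} : Set X).encard = 4 := by
        rw [Set.encard_insert_of_notMem (by simp [hxy, hxu, hxv]),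
          Set.encard_insert_of_notMem (by simp [hyu, hyv]),
          Set.encard_insert_of_notMem (by simp [huv]), Set.encard_singleton]
        rfl
      have hle := Set.encard_mono hsub
      rw [h4, hS] at hle
      exact absurd hle (by norm_num)
end

section
/- Let (X,d) be a semimetric space with |X| ≤ 3. Then the following conditions are equivalent: (1) (X,d) is strongly rigid; (2) (X,d) is weakly rigid; (3) (X,d) belongs to the class UBPP; (4) for every pair of disjoint proximinal subsets A, B of X, the proximinal graph G_{X,d}(A,B) has exactly one edge. -/
open Set

universe u v

section Aux

variable {X : Type u}

lemma prox_all [Finite X] (d : X → X → ℝ) {A : Set X} (hA : A.Nonempty) :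
    Proximinal d A := by
  intro x
  have hset : {r | ∃ a ∈ A, d x a = r} = (fun a => d x a) '' A := by
    ext r; simp [Set.mem_image]
  have hfin : {r | ∃ a ∈ A, d x a = r}.Finite := by
    rw [hset]; exact A.toFinite.image _
  have hne : {r | ∃ a ∈ A, d x a = r}.Nonempty := ⟨d x hA.choose, hA.choose, hA.choose_spec, rfl⟩
  obtain ⟨a, ha, hda⟩ := hne.csInf_mem hfin
  exact ⟨a, ha, hda⟩

lemma sDist_attained [Finite X] (d : X → X → ℝ) {A B : Set X}
    (hA : A.Nonempty) (hB : B.Nonempty) : ∃ a ∈ A, ∃ b ∈ B, d a b = sDist d A B := by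
  have hset : {r | ∃ a ∈ A, ∃ b ∈ B, d a b = r} = Set.image2 d A B := by
    ext r; simp [Set.mem_image2]
  have hfin : {r | ∃ a ∈ A, ∃ b ∈ B, d a b = r}.Finite := by
    rw [hset]; exact A.toFinite.image2 d B.toFinite
  have hne : {r | ∃ a ∈ A, ∃ b ∈ B, d a b = r}.Nonempty :=
    ⟨d hA.choose hB.choose, hA.choose, hA.choose_spec, hB.choose, hB.choose_spec, rfl⟩
  exact hne.csInf_mem hfin

lemma four_ne [Finite X] (h3 : Nat.card X ≤ 3) {a b c e : X}
    (hab : a ≠ b) (hac : a ≠ c) (hae : a ≠ e) (hbc : b ≠ c) (hbe : b ≠ e)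
    (hce : c ≠ e) : False := by
  classical
  have _inst := Fintype.ofFinite X
  have hle : ({a, b, c, e} : Finset X).card ≤ Fintype.card X := Finset.card_le_univ _
  rw [Finset.card_insert_of_notMem (by simp [hab, hac, hae]),
    Finset.card_insert_of_notMem (by simp [hbc, hbe]),
    Finset.card_insert_of_notMem (by simp [hce]), Finset.card_singleton] at hle
  have hnc : Nat.card X = Fintype.card X := Nat.card_eq_fintype_card
  omega

lemma ubpp_contra [Finite X] {d : X → X → ℝ} (hd : IsSemimetric d)
    (h : UBPP d) {p q r : X} (hpq : p ≠ q) (hpr : p ≠ r) (hqr : q ≠ r)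
    (heq : d p q = d p r) : False := by
  have hA : Proximinal d ({q, r} : Set X) := prox_all d ⟨q, by simp⟩
  have hB : Proximinal d ({p} : Set X) := prox_all d ⟨p, rfl⟩
  have hdisj : Disjoint ({q, r} : Set X) {p} := by
    rw [Set.disjoint_singleton_right]
    simp only [Set.mem_insert_iff, Set.mem_singleton_iff]
    push_neg
    exact ⟨hpq, hpr⟩
  have hrp : d r p = d q p := by
    rw [hd.2.1 r p, hd.2.1 q p]; exact heq.symm
  have hset : {s | ∃ a ∈ ({q, r} : Set X), ∃ b ∈ ({p} : Set X), d a b = s} = {d q p} := by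
    ext s
    constructor
    · rintro ⟨a, ha, b, hb, rfl⟩
      rcases hb with rfl
      rcases ha with rfl | rfl
      · rfl
      · exact hrp
    · rintro rfl
      exact ⟨q, by simp, p, rfl, rfl⟩
  have hsd : sDist d {q, r} {p} = d q p := by rw [sDist, hset, csInf_singleton]
  have := h {q, r} {p} hdisj hA hB q (by simp) p rfl r (by simp) p rfl
    (by rw [hsd]) (by rw [hsd]; exact hrp)
  exact hqr this.1

end Aux

/-- For a semimetric space with at most three points, strong rigidity, weak
rigidity, membership in UBPP, and the property that every proximinal graph has exactly one
edge are all equivalent. -/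
theorem stmt_3 {X : Type u} [Nonempty X] (d : X → X → ℝ) (hd : IsSemimetric d)
    (hcard : Cardinal.mk X ≤ 3) :
    List.TFAE [StronglyRigid d, WeaklyRigid d, UBPP d,
      ∀ A B : Set X, Disjoint A B → Proximinal d A → Proximinal d B →
        ∃! p : X × X, p.1 ∈ A ∧ p.2 ∈ B ∧ d p.1 p.2 = sDist d A B] := by
  have hfin : Finite X := by
    refine Cardinal.lt_aleph0_iff_finite.mp (lt_of_le_of_lt hcard ?_)
    exact_mod_cast Cardinal.nat_lt_aleph0 3
  have h3 : Nat.card X ≤ 3 := by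
    have := Cardinal.toNat_le_toNat hcard (by exact_mod_cast Cardinal.nat_lt_aleph0 3)
    simpa [Nat.card] using this
  tfae_have 1 → 2 := by
    intro h S _ x _ y _ u _ v _ hxy hdeq
    exact h x y u v hxy hdeq
  tfae_have 2 → 1 := by
    intro h x y u v hxy hdeq
    by_contra hne
    have huv : u ≠ v := by
      rintro rfl
      rw [(hd.2.2 u u).mpr rfl] at hdeq
      exact hxy ((hd.2.2 x y).mp hdeq)
    -- find w ∈ {u,v} with w ∉ {x,y}
    have hw : ∃ w : X, (w = u ∨ w = v) ∧ w ≠ x ∧ w ≠ y := by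
      by_contra hc
      push_neg at hc
      have hu := hc u (Or.inl rfl)
      have hv := hc v (Or.inr rfl)
      apply hne
      have hu : u = x ∨ u = y := by tauto
      have hv : v = x ∨ v = y := by tauto
      rcases hu with h1 | h1 <;> rcases hv with h2 | h2
      · exact absurd (h1.trans h2.symm) huv
      · rw [h1, h2]
      · rw [h1, h2]; exact Set.pair_comm x y
      · exact absurd (h1.trans h2.symm) huv
    obtain ⟨w, hwuv, hwx, hwy⟩ := hw
    have hall : ∀ z : X, z ∈ ({x, y, w} : Set X) := by
      intro z
      by_contra hz
      simp only [Set.mem_insert_iff, Set.mem_singleton_iff] at hz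
      push_neg at hz
      exact four_ne h3 hxy hwx.symm hz.1.symm hwy.symm hz.2.1.symm hz.2.2.symm
    have hS : ({x, y, w} : Set X).encard = 3 := by
      rw [Set.encard_eq_three]
      exact ⟨x, y, w, hxy, Ne.symm hwx, Ne.symm hwy, rfl⟩
    exact hne (h {x, y, w} hS x (by simp) y (by simp) u (hall u) v (hall v) hxy hdeq)
  tfae_have 1 → 3 := by
    intro h A B hdisj _ _ a₁ ha₁ b₁ hb₁ a₂ ha₂ b₂ hb₂ h₁ h₂
    have hab₁ : a₁ ≠ b₁ := fun e => (hdisj.ne_of_mem ha₁ hb₁) e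
    have hpair := h a₁ b₁ a₂ b₂ hab₁ (h₁.trans h₂.symm)
    have ha₁' : a₁ ∈ ({a₂, b₂} : Set X) := hpair ▸ (by simp : a₁ ∈ ({a₁, b₁} : Set X))
    have hb₁' : b₁ ∈ ({a₂, b₂} : Set X) := hpair ▸ (by simp : b₁ ∈ ({a₁, b₁} : Set X))
    rcases ha₁' with rfl | rfl
    · rcases hb₁' with rfl | rfl
      · exact absurd rfl hab₁
      · exact ⟨rfl, rfl⟩
    · exact absurd rfl (hdisj.ne_of_mem ha₁ hb₂)
  tfae_have 3 → 1 := by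
    intro h x y u v hxy hdeq
    by_contra hne
    have huv : u ≠ v := by
      rintro rfl
      rw [(hd.2.2 u u).mpr rfl] at hdeq
      exact hxy ((hd.2.2 x y).mp hdeq)
    have hcase : u = x ∨ u = y ∨ v = x ∨ v = y := by
      by_contra hc
      push_neg at hc
      exact four_ne h3 hxy hc.1.symm hc.2.2.1.symm hc.2.1.symm hc.2.2.2.symm huv
    rcases hcase with e | e | e | e
    · -- u = x : d x y = d x v
      rw [e] at hdeq huv
      have hyv : y ≠ v := fun e2 => hne (by rw [e, e2])
      exact ubpp_contra hd h hxy huv hyv hdeq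
    · -- u = y : d y x = d y v
      rw [e] at hdeq huv
      rw [hd.2.1 x y] at hdeq
      have hxv : x ≠ v := fun e2 => hne (by rw [e, e2]; exact Set.pair_comm v y)
      exact ubpp_contra hd h (Ne.symm hxy) huv hxv hdeq
    · -- v = x : d x y = d x u
      rw [e] at hdeq huv
      rw [hd.2.1 u x] at hdeq
      have hyu : y ≠ u := fun e2 => hne (by rw [e, e2]; exact Set.pair_comm x u)
      exact ubpp_contra hd h hxy (Ne.symm huv) hyu hdeq
    · -- v = y : d y x = d y u
      rw [e] at hdeq huv
      rw [hd.2.1 u y, hd.2.1 x y] at hdeq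
      have hxu : x ≠ u := fun e2 => hne (by rw [e, e2])
      exact ubpp_contra hd h (Ne.symm hxy) (Ne.symm huv) hxu hdeq
  tfae_have 3 → 4 := by
    intro h A B hdisj hA hB
    have hAne : A.Nonempty := by
      obtain ⟨x⟩ := ‹Nonempty X›
      obtain ⟨a, ha, -⟩ := hA x
      exact ⟨a, ha⟩
    have hBne : B.Nonempty := by
      obtain ⟨x⟩ := ‹Nonempty X›
      obtain ⟨b, hb, -⟩ := hB x
      exact ⟨b, hb⟩
    obtain ⟨a, ha, b, hb, hab⟩ := sDist_attained d hAne hBne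
    refine ⟨(a, b), ⟨ha, hb, hab⟩, ?_⟩
    rintro ⟨a', b'⟩ ⟨ha', hb', hab'⟩
    obtain ⟨h1, h2⟩ := h A B hdisj hA hB a' ha' b' hb' a ha b hb hab' hab
    exact Prod.ext h1 h2
  tfae_have 4 → 3 := by
    intro h A B hdisj hA hB a₁ ha₁ b₁ hb₁ a₂ ha₂ b₂ hb₂ h₁ h₂
    obtain ⟨p, -, hp⟩ := h A B hdisj hA hB
    have e₁ := hp (a₁, b₁) ⟨ha₁, hb₁, h₁⟩
    have e₂ := hp (a₂, b₂) ⟨ha₂, hb₂, h₂⟩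
    have e := e₁.trans e₂.symm
    exact ⟨congrArg Prod.fst e, congrArg Prod.snd e⟩
  tfae_finish
end

section
/- A graph G is not isomorphic to any proximinal graph of any strongly rigid metric space (i.e., there is no strongly rigid metric space (X,d) with disjoint proximinal subsets A,B ⊆ X such that G is isomorphic to G_{X,d}(A,B)) if and only if G is a finite null graph, or the cardinality of V(G) exceeds the cardinality 𝔠 of the continuum, or G has more than one edge. -/
open Set

universe u v

section MkD

open scoped Classical

variable {X : Type u}

/-- auxiliary metric: `10` or `11` (according to `Sp`) plus a small injective perturbation. -/
noncomputable def mkD (Sp : Sym2 X → Prop) (φ : Sym2 X → ℝ) : X → X → ℝ :=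
  fun x y => if x = y then 0 else (if Sp s(x, y) then 10 else 11) + φ s(x, y)

variable {Sp : Sym2 X → Prop} {φ : Sym2 X → ℝ}

lemma mkD_self (x : X) : mkD Sp φ x x = 0 := by simp [mkD]

lemma mkD_sp {x y : X} (h : x ≠ y) (hs : Sp s(x, y)) :
    mkD Sp φ x y = 10 + φ s(x, y) := by
  simp [mkD, h, hs]

lemma mkD_nsp {x y : X} (h : x ≠ y) (hs : ¬ Sp s(x, y)) :
    mkD Sp φ x y = 11 + φ s(x, y) := by
  simp [mkD, h, hs]

variable (hpos : ∀ s, 0 < φ s) (hlt : ∀ s, φ s < 1)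

include hpos in
lemma mkD_gt {x y : X} (h : x ≠ y) : 10 < mkD Sp φ x y := by
  have := hpos s(x, y)
  by_cases hs : Sp s(x, y)
  · rw [mkD_sp h hs]; linarith
  · rw [mkD_nsp h hs]; linarith

include hpos hlt in
lemma mkD_lt {x y : X} (h : x ≠ y) : mkD Sp φ x y < 12 := by
  have := hlt s(x, y)
  by_cases hs : Sp s(x, y)
  · rw [mkD_sp h hs]; linarith
  · rw [mkD_nsp h hs]; linarith

include hpos in
lemma mkD_nonneg (x y : X) : 0 ≤ mkD Sp φ x y := by
  rcases eq_or_ne x y with rfl | h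
  · simp [mkD_self]
  · linarith [mkD_gt (Sp := Sp) hpos h]

include hpos hlt in
lemma mkD_sp_lt {x y : X} (h : x ≠ y) (hs : Sp s(x, y)) :
    mkD Sp φ x y < 11 := by
  rw [mkD_sp h hs]; linarith [hlt s(x, y)]

include hpos in
lemma mkD_nsp_gt {x y : X} (h : x ≠ y) (hs : ¬ Sp s(x, y)) :
    11 < mkD Sp φ x y := by
  rw [mkD_nsp h hs]; linarith [hpos s(x, y)]

lemma mkD_comm (x y : X) : mkD Sp φ x y = mkD Sp φ y x := by
  rcases eq_or_ne x y with rfl | h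
  · rfl
  · have hs : (s(y, x) : Sym2 X) = s(x, y) := Sym2.eq_swap
    unfold mkD
    rw [if_neg h, if_neg (Ne.symm h), hs]

include hpos hlt in
lemma mkD_metric : IsMetricD (mkD Sp φ) := by
  refine ⟨⟨mkD_nonneg hpos, mkD_comm, ?_⟩, ?_⟩
  · intro x y
    constructor
    · intro h0
      by_contra h
      have := mkD_gt (Sp := Sp) hpos h
      linarith
    · rintro rfl; exact mkD_self x
  · intro x y z
    rcases eq_or_ne x y with rfl | hxy
    · rw [mkD_self]
      exact add_nonneg (mkD_nonneg hpos x z) (mkD_nonneg hpos z x)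
    rcases eq_or_ne z x with rfl | hzx
    · rw [mkD_self]
      rw [mkD_comm (Sp := Sp) (φ := φ) z y]
      linarith
    rcases eq_or_ne z y with rfl | hzy
    · rw [mkD_self]
      simp
    · have h1 := mkD_gt (Sp := Sp) hpos (Ne.symm hzx)
      have h2 := mkD_gt (Sp := Sp) hpos hzy
      have h3 := mkD_lt (Sp := Sp) hpos hlt hxy
      linarith

variable (hinj : Function.Injective φ)

include hpos hlt hinj in
lemma mkD_rigid : StronglyRigid (mkD Sp φ) := by
  intro x y u v hxy heq
  rcases eq_or_ne u v with rfl | huv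
  · rw [mkD_self] at heq
    have := mkD_gt (Sp := Sp) hpos hxy
    linarith
  · have hφ : φ s(x, y) = φ s(u, v) := by
      have p1 := hpos s(x, y); have p2 := hpos s(u, v)
      have l1 := hlt s(x, y); have l2 := hlt s(u, v)
      by_cases h1 : Sp s(x, y) <;> by_cases h2 : Sp s(u, v)
      · rw [mkD_sp hxy h1, mkD_sp huv h2] at heq; linarith
      · rw [mkD_sp hxy h1, mkD_nsp huv h2] at heq; linarith
      · rw [mkD_nsp hxy h1, mkD_sp huv h2] at heq; linarith
      · rw [mkD_nsp hxy h1, mkD_nsp huv h2] at heq; linarith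
    rcases Sym2.eq_iff.mp (hinj hφ) with ⟨rfl, rfl⟩ | ⟨rfl, rfl⟩
    · rfl
    · exact Set.pair_comm x y

end MkD

section Realize

lemma sym2_card_le {α : Type u} (h : Cardinal.mk α ≤ Cardinal.continuum) :
    Cardinal.mk (Sym2 α) ≤ Cardinal.continuum := by
  have h1 : Cardinal.mk (Sym2 α) ≤ Cardinal.mk (α × α) :=
    Cardinal.mk_le_of_surjective (f := (Sym2.mk (α := α)).uncurry)
      Sym2.mk_surjective
  have h2 : Cardinal.mk (α × α) ≤ Cardinal.continuum := by
    rw [Cardinal.mk_prod, Cardinal.lift_id]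
    calc Cardinal.mk α * Cardinal.mk α ≤ Cardinal.continuum * Cardinal.continuum :=
          mul_le_mul' h h
      _ = Cardinal.continuum := Cardinal.continuum_mul_self
  exact h1.trans h2

lemma exists_emb_Ioo {α : Type u} (h : Cardinal.mk α ≤ Cardinal.continuum) {a b : ℝ}
    (hab : a < b) : Nonempty (α ↪ ↥(Set.Ioo a b)) := by
  apply Cardinal.lift_mk_le'.mp
  rw [Cardinal.mk_Ioo_real hab, Cardinal.lift_continuum, Cardinal.lift_id']
  exact h

/-- the perturbation function obtained from an embedding into `Ioo 0 1`. -/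
noncomputable def phiOf {α : Type u} (g : α ↪ ↥(Set.Ioo (0:ℝ) 1)) : α → ℝ :=
  fun s => (g s : ℝ)

lemma phiOf_pos {α : Type u} (g : α ↪ ↥(Set.Ioo (0:ℝ) 1)) : ∀ s, 0 < phiOf g s :=
  fun s => (g s).2.1

lemma phiOf_lt {α : Type u} (g : α ↪ ↥(Set.Ioo (0:ℝ) 1)) : ∀ s, phiOf g s < 1 :=
  fun s => (g s).2.2

lemma phiOf_inj {α : Type u} (g : α ↪ ↥(Set.Ioo (0:ℝ) 1)) : Function.Injective (phiOf g) :=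
  fun s t h => g.injective (Subtype.ext h)

lemma realize_one_edge {V : Type u} (G : SimpleGraph V) (hV : Cardinal.mk V ≤ Cardinal.continuum)
    {u₀ w₀ : V} (he : G.Adj u₀ w₀) (hsub : G.edgeSet.Subsingleton) :
    ∃ (X : Type u) (d : X → X → ℝ) (A B : Set X),
      IsMetricD d ∧ StronglyRigid d ∧ Disjoint A B ∧ A.Nonempty ∧ B.Nonempty ∧
      Proximinal d A ∧ Proximinal d B ∧
      ∃ f : V ≃ ↥(A ∪ B),
        ∀ u w : V, G.Adj u w ↔
          ((((f u : X) ∈ A ∧ (f w : X) ∈ B) ∨ ((f u : X) ∈ B ∧ (f w : X) ∈ A)) ∧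
            d (f u) (f w) = sDist d A B) := by
  classical
  have hne : u₀ ≠ w₀ := he.ne
  obtain ⟨g⟩ := exists_emb_Ioo (sym2_card_le hV) (show (0:ℝ) < 1 by norm_num)
  have hpos := phiOf_pos g
  have hlt := phiOf_lt g
  have hinj := phiOf_inj g
  have hSp0 : (s(u₀, w₀) : Sym2 V) = s(u₀, w₀) := rfl
  have hd0lt : mkD (fun s => s = s(u₀, w₀)) (phiOf g) u₀ w₀ < 11 :=
    mkD_sp_lt hpos hlt hne hSp0
  have hlow : ∀ b : V, b ≠ u₀ → b ≠ w₀ →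
      11 < mkD (fun s => s = s(u₀, w₀)) (phiOf g) u₀ b := by
    intro b hb1 hb2
    refine mkD_nsp_gt hpos (Ne.symm hb1) ?_
    intro hs
    rcases Sym2.eq_iff.mp hs with ⟨_, h2⟩ | ⟨h1, _⟩
    · exact hb2 h2
    · exact hne h1
  have hwB : w₀ ∈ ({u₀}ᶜ : Set V) := fun h => hne (Set.mem_singleton_iff.mp h).symm
  have hlb : ∀ r ∈ {r | ∃ a ∈ ({u₀} : Set V), ∃ b ∈ ({u₀}ᶜ : Set V),
      mkD (fun s => s = s(u₀, w₀)) (phiOf g) a b = r},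
      mkD (fun s => s = s(u₀, w₀)) (phiOf g) u₀ w₀ ≤ r := by
    rintro r ⟨a, ha, b, hb, rfl⟩
    rcases Set.mem_singleton_iff.mp ha with rfl
    have hbu : b ≠ a := fun h => hb (Set.mem_singleton_iff.mpr h)
    by_cases hbw : b = w₀
    · subst hbw; exact le_refl _
    · exact le_of_lt (hd0lt.trans (hlow b hbu hbw))
  have hsd : sDist (mkD (fun s => s = s(u₀, w₀)) (phiOf g)) ({u₀} : Set V) ({u₀}ᶜ : Set V)
      = mkD (fun s => s = s(u₀, w₀)) (phiOf g) u₀ w₀ :=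
    IsLeast.csInf_eq ⟨⟨u₀, rfl, w₀, hwB, rfl⟩, hlb⟩
  have hproxA : Proximinal (mkD (fun s => s = s(u₀, w₀)) (phiOf g)) ({u₀} : Set V) := by
    intro x
    refine ⟨u₀, rfl, ?_⟩
    have hset : {r | ∃ a ∈ ({u₀} : Set V), mkD (fun s => s = s(u₀, w₀)) (phiOf g) x a = r}
        = {mkD (fun s => s = s(u₀, w₀)) (phiOf g) x u₀} := by
      ext r
      simp [eq_comm]
    rw [pDist, hset, csInf_singleton]
  have hproxB : Proximinal (mkD (fun s => s = s(u₀, w₀)) (phiOf g)) ({u₀}ᶜ : Set V) := by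
    intro x
    by_cases hx : x = u₀
    · refine ⟨w₀, hwB, ?_⟩
      rw [hx, pDist]
      have hL : IsLeast {r | ∃ a ∈ ({u₀}ᶜ : Set V),
          mkD (fun s => s = s(u₀, w₀)) (phiOf g) u₀ a = r}
          (mkD (fun s => s = s(u₀, w₀)) (phiOf g) u₀ w₀) := by
        refine ⟨⟨w₀, hwB, rfl⟩, ?_⟩
        rintro r ⟨b, hb, rfl⟩
        have hbu : b ≠ u₀ := fun h => hb (Set.mem_singleton_iff.mpr h)
        by_cases hbw : b = w₀
        · subst hbw; exact le_refl _
        · exact le_of_lt (hd0lt.trans (hlow b hbu hbw))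
      exact hL.csInf_eq.symm
    · refine ⟨x, fun h => hx (Set.mem_singleton_iff.mp h), ?_⟩
      rw [mkD_self, pDist]
      have hL : IsLeast {r | ∃ a ∈ ({u₀}ᶜ : Set V),
          mkD (fun s => s = s(u₀, w₀)) (phiOf g) x a = r} 0 := by
        refine ⟨⟨x, fun h => hx (Set.mem_singleton_iff.mp h), mkD_self x⟩, ?_⟩
        rintro r ⟨a, _, rfl⟩
        exact mkD_nonneg hpos x a
      exact hL.csInf_eq.symm
  have huniv : ({u₀} : Set V) ∪ ({u₀}ᶜ : Set V) = Set.univ := Set.union_compl_self _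
  refine ⟨V, mkD (fun s => s = s(u₀, w₀)) (phiOf g), ({u₀} : Set V), ({u₀}ᶜ : Set V),
    mkD_metric hpos hlt, mkD_rigid hpos hlt hinj,
    disjoint_compl_right, ⟨u₀, rfl⟩, ⟨w₀, hwB⟩, hproxA, hproxB,
    (Equiv.Set.univ V).symm.trans (Equiv.setCongr huniv.symm), ?_⟩
  intro u w
  show G.Adj u w ↔ ((u ∈ ({u₀} : Set V) ∧ w ∈ ({u₀}ᶜ : Set V)
      ∨ u ∈ ({u₀}ᶜ : Set V) ∧ w ∈ ({u₀} : Set V)) ∧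
      mkD (fun s => s = s(u₀, w₀)) (phiOf g) u w
        = sDist (mkD (fun s => s = s(u₀, w₀)) (phiOf g)) ({u₀} : Set V) ({u₀}ᶜ : Set V))
  constructor
  · intro hA
    have hs : (s(u, w) : Sym2 V) = s(u₀, w₀) :=
      hsub (G.mem_edgeSet.mpr hA) (G.mem_edgeSet.mpr he)
    have huw : u ≠ w := hA.ne
    have hd : mkD (fun s => s = s(u₀, w₀)) (phiOf g) u w
        = mkD (fun s => s = s(u₀, w₀)) (phiOf g) u₀ w₀ := by
      rw [mkD_sp (Sp := fun s => s = s(u₀, w₀)) huw hs, mkD_sp (Sp := fun s => s = s(u₀, w₀)) hne hSp0, hs]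
    rcases Sym2.eq_iff.mp hs with ⟨h1, h2⟩ | ⟨h1, h2⟩
    · refine ⟨Or.inl ⟨Set.mem_singleton_iff.mpr h1, ?_⟩, by rw [hsd, hd]⟩
      intro hmem
      exact hne ((Set.mem_singleton_iff.mp hmem).symm.trans h2)
    · refine ⟨Or.inr ⟨?_, Set.mem_singleton_iff.mpr h2⟩, by rw [hsd, hd]⟩
      intro hmem
      exact hne ((Set.mem_singleton_iff.mp hmem).symm.trans h1)
  · rintro ⟨hcr, hdist⟩
    have huw : u ≠ w := by
      rcases hcr with ⟨h1, h2⟩ | ⟨h1, h2⟩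
      · rcases Set.mem_singleton_iff.mp h1 with rfl
        exact fun h => h2 (Set.mem_singleton_iff.mpr h.symm)
      · rcases Set.mem_singleton_iff.mp h2 with rfl
        exact fun h => h1 (Set.mem_singleton_iff.mpr h)
    by_cases hs : (s(u, w) : Sym2 V) = s(u₀, w₀)
    · rcases Sym2.eq_iff.mp hs with ⟨rfl, rfl⟩ | ⟨rfl, rfl⟩
      · exact he
      · exact he.symm
    · exfalso
      have h11 := mkD_nsp_gt (Sp := fun s => s = s(u₀, w₀)) hpos huw hs
      rw [hdist, hsd] at h11
      linarith

end Realize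

section RealizeNull

lemma phi_spec {α : Type u} (Q : ℕ → α) (hQ : Function.Injective Q)
    (g : α ↪ ↥(Set.Ioo (1/2 : ℝ) 1)) :
    ∃ φ : α → ℝ, (∀ s, 0 < φ s) ∧ (∀ s, φ s < 1) ∧ Function.Injective φ ∧
      ∀ k : ℕ, φ (Q k) = 1/((k : ℝ)+2) := by
  classical
  have hhalf : ∀ c : ℕ, (1:ℝ)/((c:ℝ)+2) ≤ 1/2 := by
    intro c
    have : (0:ℝ) ≤ (c:ℝ) := Nat.cast_nonneg c
    exact one_div_le_one_div_of_le (by norm_num) (by linarith)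
  have hposd : ∀ c : ℕ, (0:ℝ) < 1/((c:ℝ)+2) := by
    intro c
    have : (0:ℝ) ≤ (c:ℝ) := Nat.cast_nonneg c
    positivity
  refine ⟨fun s => if h : ∃ k, s = Q k then 1/((h.choose : ℝ)+2) else (g s : ℝ),
    ?_, ?_, ?_, ?_⟩
  · intro s
    by_cases h : ∃ k, s = Q k
    · simp only [dif_pos h]; exact hposd _
    · simp only [dif_neg h]
      have := (g s).2.1
      linarith
  · intro s
    by_cases h : ∃ k, s = Q k
    · simp only [dif_pos h]
      have := hhalf h.choose
      linarith
    · simp only [dif_neg h]; exact (g s).2.2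
  · intro s t h
    by_cases hs : ∃ k, s = Q k <;> by_cases ht : ∃ k, t = Q k
    · simp only [dif_pos hs, dif_pos ht] at h
      have hr : ((hs.choose:ℝ)+2) = ((ht.choose:ℝ)+2) := by
        rw [← one_div_one_div (((hs.choose:ℝ))+2), h, one_div_one_div]
      have hr2 : ((hs.choose : ℝ)) = ((ht.choose : ℝ)) := by linarith
      have h3 : hs.choose = ht.choose := Nat.cast_injective hr2
      rw [hs.choose_spec, ht.choose_spec, h3]
    · simp only [dif_pos hs, dif_neg ht] at h
      have := (g t).2.1
      have := hhalf hs.choose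
      linarith
    · simp only [dif_neg hs, dif_pos ht] at h
      have := (g s).2.1
      have := hhalf ht.choose
      linarith
    · simp only [dif_neg hs, dif_neg ht] at h
      exact g.injective (Subtype.ext h)
  · intro k
    have h : ∃ j, Q k = Q j := ⟨k, rfl⟩
    simp only [dif_pos h]
    have h3 : k = h.choose := hQ h.choose_spec
    rw [← h3]

/-- partner pairs in `V ⊕ V`. -/
def spPair (V : Type u) : Sym2 (V ⊕ V) → Prop := fun s => ∃ t : V, s = s(Sum.inl t, Sum.inr t)

lemma spPair_mk {V : Type u} (v : V) : spPair V s(Sum.inl v, Sum.inr v) := ⟨v, rfl⟩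

lemma spPair_swap {V : Type u} (v : V) : spPair V s(Sum.inr v, Sum.inl v) := ⟨v, Sym2.eq_swap⟩

lemma not_spPair_cross {V : Type u} {v w : V} (hvw : v ≠ w) :
    ¬ spPair V s(Sum.inl v, Sum.inr w) := by
  rintro ⟨t, ht⟩
  rcases Sym2.eq_iff.mp ht with ⟨h1, h2⟩ | ⟨h1, _⟩
  · exact hvw ((Sum.inl_injective h1).trans (Sum.inr_injective h2).symm)
  · exact absurd h1 (by simp)

lemma not_spPair_cross' {V : Type u} {v w : V} (hvw : v ≠ w) :
    ¬ spPair V s(Sum.inr w, Sum.inl v) := by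
  rintro ⟨t, ht⟩
  rcases Sym2.eq_iff.mp ht with ⟨h1, _⟩ | ⟨h1, h2⟩
  · exact absurd h1 (by simp)
  · exact hvw ((Sum.inl_injective h2).trans (Sum.inr_injective h1).symm)

lemma realize_null {V : Type u} (G : SimpleGraph V) [Infinite V]
    (hV : Cardinal.mk V ≤ Cardinal.continuum) (hnull : G.edgeSet = ∅) :
    ∃ (X : Type u) (d : X → X → ℝ) (A B : Set X),
      IsMetricD d ∧ StronglyRigid d ∧ Disjoint A B ∧ A.Nonempty ∧ B.Nonempty ∧
      Proximinal d A ∧ Proximinal d B ∧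
      ∃ f : V ≃ ↥(A ∪ B),
        ∀ u w : V, G.Adj u w ↔
          ((((f u : X) ∈ A ∧ (f w : X) ∈ B) ∨ ((f u : X) ∈ B ∧ (f w : X) ∈ A)) ∧
            d (f u) (f w) = sDist d A B) := by
  classical
  have hVV : Cardinal.mk (V ⊕ V) ≤ Cardinal.continuum := by
    rw [Cardinal.mk_sum, Cardinal.lift_id]
    calc Cardinal.mk V + Cardinal.mk V ≤ Cardinal.continuum + Cardinal.continuum :=
          add_le_add hV hV
      _ = Cardinal.continuum := Cardinal.add_eq_self Cardinal.aleph0_le_continuum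
  obtain ⟨g⟩ := exists_emb_Ioo (sym2_card_le hVV) (show (1/2:ℝ) < 1 by norm_num)
  set n : ℕ ↪ V := Infinite.natEmbedding V with hn
  have hQinj : Function.Injective
      (fun k : ℕ => (s(Sum.inl (n k), Sum.inr (n k)) : Sym2 (V ⊕ V))) := by
    intro j k h
    rcases Sym2.eq_iff.mp h with ⟨h1, _⟩ | ⟨h1, _⟩
    · exact n.injective (Sum.inl_injective h1)
    · exact absurd h1 (by simp)
  obtain ⟨φ, hpos, hlt, hinj, hkey⟩ :=
    phi_spec (fun k : ℕ => (s(Sum.inl (n k), Sum.inr (n k)) : Sym2 (V ⊕ V))) hQinj g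
  have hproxA : Proximinal (mkD (spPair V) φ) (Set.range Sum.inl) := by
    rintro (v | w)
    · refine ⟨Sum.inl v, ⟨v, rfl⟩, ?_⟩
      rw [mkD_self, pDist]
      have hL : IsLeast {r | ∃ a ∈ Set.range (Sum.inl : V → V ⊕ V),
          mkD (spPair V) φ (Sum.inl v) a = r} 0 := by
        refine ⟨⟨Sum.inl v, ⟨v, rfl⟩, mkD_self _⟩, ?_⟩
        rintro r ⟨a, _, rfl⟩
        exact mkD_nonneg hpos _ _
      exact hL.csInf_eq.symm
    · refine ⟨Sum.inl w, ⟨w, rfl⟩, ?_⟩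
      rw [pDist]
      have hpart : mkD (spPair V) φ (Sum.inr w) (Sum.inl w) < 11 :=
        mkD_sp_lt hpos hlt (by simp) (spPair_swap w)
      have hL : IsLeast {r | ∃ a ∈ Set.range (Sum.inl : V → V ⊕ V),
          mkD (spPair V) φ (Sum.inr w) a = r}
          (mkD (spPair V) φ (Sum.inr w) (Sum.inl w)) := by
        refine ⟨⟨Sum.inl w, ⟨w, rfl⟩, rfl⟩, ?_⟩
        rintro r ⟨a, ⟨v, rfl⟩, rfl⟩
        by_cases hvw : v = w
        · subst hvw; exact le_refl _
        · have h11 := mkD_nsp_gt (φ := φ) hpos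
            (show (Sum.inr w : V ⊕ V) ≠ Sum.inl v by simp) (not_spPair_cross' hvw)
          linarith
      exact hL.csInf_eq.symm
  have hproxB : Proximinal (mkD (spPair V) φ) (Set.range Sum.inr) := by
    rintro (v | w)
    · refine ⟨Sum.inr v, ⟨v, rfl⟩, ?_⟩
      rw [pDist]
      have hpart : mkD (spPair V) φ (Sum.inl v) (Sum.inr v) < 11 :=
        mkD_sp_lt hpos hlt (by simp) (spPair_mk v)
      have hL : IsLeast {r | ∃ a ∈ Set.range (Sum.inr : V → V ⊕ V),
          mkD (spPair V) φ (Sum.inl v) a = r}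
          (mkD (spPair V) φ (Sum.inl v) (Sum.inr v)) := by
        refine ⟨⟨Sum.inr v, ⟨v, rfl⟩, rfl⟩, ?_⟩
        rintro r ⟨a, ⟨w, rfl⟩, rfl⟩
        by_cases hvw : v = w
        · subst hvw; exact le_refl _
        · have h11 := mkD_nsp_gt (φ := φ) hpos
            (show (Sum.inl v : V ⊕ V) ≠ Sum.inr w by simp) (not_spPair_cross hvw)
          linarith
      exact hL.csInf_eq.symm
    · refine ⟨Sum.inr w, ⟨w, rfl⟩, ?_⟩
      rw [mkD_self, pDist]
      have hL : IsLeast {r | ∃ a ∈ Set.range (Sum.inr : V → V ⊕ V),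
          mkD (spPair V) φ (Sum.inr w) a = r} 0 := by
        refine ⟨⟨Sum.inr w, ⟨w, rfl⟩, mkD_self _⟩, ?_⟩
        rintro r ⟨a, _, rfl⟩
        exact mkD_nonneg hpos _ _
      exact hL.csInf_eq.symm
  have hgtS : ∀ r ∈ {r | ∃ a ∈ Set.range (Sum.inl : V → V ⊕ V),
      ∃ b ∈ Set.range (Sum.inr : V → V ⊕ V), mkD (spPair V) φ a b = r}, 10 < r := by
    rintro r ⟨a, ⟨v, rfl⟩, b, ⟨w, rfl⟩, rfl⟩
    exact mkD_gt hpos (by simp)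
  have hbdd : BddBelow {r | ∃ a ∈ Set.range (Sum.inl : V → V ⊕ V),
      ∃ b ∈ Set.range (Sum.inr : V → V ⊕ V), mkD (spPair V) φ a b = r} :=
    ⟨10, fun r hr => le_of_lt (hgtS r hr)⟩
  have hmemk : ∀ k : ℕ, (10 + 1/((k:ℝ)+2)) ∈ {r | ∃ a ∈ Set.range (Sum.inl : V → V ⊕ V),
      ∃ b ∈ Set.range (Sum.inr : V → V ⊕ V), mkD (spPair V) φ a b = r} := by
    intro k
    refine ⟨Sum.inl (n k), ⟨n k, rfl⟩, Sum.inr (n k), ⟨n k, rfl⟩, ?_⟩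
    rw [mkD_sp (by simp) (spPair_mk (n k)), hkey k]
  have hsdist : sDist (mkD (spPair V) φ) (Set.range Sum.inl) (Set.range Sum.inr) = 10 := by
    rw [sDist]
    refine le_antisymm ?_ (le_csInf ⟨_, hmemk 0⟩ fun r hr => le_of_lt (hgtS r hr))
    by_contra hlt'
    push_neg at hlt'
    obtain ⟨m, hm⟩ := exists_nat_one_div_lt (sub_pos.mpr hlt')
    have h1 := csInf_le hbdd (hmemk m)
    have h2 : (1:ℝ)/((m:ℝ)+2) ≤ 1/((m:ℝ)+1) := by
      have : (0:ℝ) ≤ (m:ℝ) := Nat.cast_nonneg m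
      exact one_div_le_one_div_of_le (by linarith) (by linarith)
    linarith
  have hcard : Cardinal.mk V = Cardinal.mk (V ⊕ V) := by
    rw [Cardinal.mk_sum, Cardinal.lift_id]
    exact (Cardinal.add_eq_self (Cardinal.infinite_iff.mp inferInstance)).symm
  obtain ⟨e⟩ := Cardinal.eq.mp hcard
  have huniv : Set.range (Sum.inl : V → V ⊕ V) ∪ Set.range (Sum.inr : V → V ⊕ V)
      = Set.univ := by
    ext x
    rcases x with v | w
    · simp
    · simp
  refine ⟨V ⊕ V, mkD (spPair V) φ, Set.range Sum.inl, Set.range Sum.inr,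
    mkD_metric hpos hlt, mkD_rigid hpos hlt hinj, ?_,
    ⟨Sum.inl (n 0), ⟨n 0, rfl⟩⟩, ⟨Sum.inr (n 0), ⟨n 0, rfl⟩⟩, hproxA, hproxB,
    e.trans ((Equiv.Set.univ (V ⊕ V)).symm.trans (Equiv.setCongr huniv.symm)), ?_⟩
  · rw [Set.disjoint_left]
    rintro x ⟨v, rfl⟩ ⟨w, hw⟩
    exact absurd hw (by simp)
  · intro u w
    constructor
    · intro h
      have hmem := G.mem_edgeSet.mpr h
      rw [hnull] at hmem
      exact absurd hmem (Set.notMem_empty _)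
    · rintro ⟨hcr, hdist⟩
      exfalso
      have hne : ∀ p q : V ⊕ V, p ∈ Set.range (Sum.inl : V → V ⊕ V) →
          q ∈ Set.range (Sum.inr : V → V ⊕ V) → p ≠ q := by
        rintro p q ⟨v, rfl⟩ ⟨t, rfl⟩
        simp
      have h10 : (10:ℝ) < 10 := by
        rcases hcr with ⟨h1, h2⟩ | ⟨h1, h2⟩
        · have hgt := mkD_gt (Sp := spPair V) (φ := φ) hpos (hne _ _ h1 h2)
          rw [hdist, hsdist] at hgt
          exact hgt
        · have hgt := mkD_gt (Sp := spPair V) (φ := φ) hpos (Ne.symm (hne _ _ h2 h1))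
          rw [hdist, hsdist] at hgt
          exact hgt
      exact lt_irrefl _ h10

end RealizeNull

/-- A graph `G` is not isomorphic to any proximinal graph of any strongly rigid
metric space iff `G` is a finite null graph, or has more than continuum many vertices, or has
more than one edge. -/
theorem stmt_4 {V : Type u} (G : SimpleGraph V) :
    (¬ ∃ (X : Type u) (d : X → X → ℝ) (A B : Set X),
        IsMetricD d ∧ StronglyRigid d ∧ Disjoint A B ∧ A.Nonempty ∧ B.Nonempty ∧
        Proximinal d A ∧ Proximinal d B ∧
        ∃ f : V ≃ ↥(A ∪ B),
          ∀ u w : V, G.Adj u w ↔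
            ((((f u : X) ∈ A ∧ (f w : X) ∈ B) ∨ ((f u : X) ∈ B ∧ (f w : X) ∈ A)) ∧
              d (f u) (f w) = sDist d A B))
    ↔ ((Finite V ∧ G.edgeSet = ∅) ∨ Cardinal.continuum < Cardinal.mk V ∨
        ¬ G.edgeSet.Subsingleton) := by
  constructor
  · intro h
    by_contra hR
    push_neg at hR
    obtain ⟨h1, h2, h3⟩ := hR
    by_cases hE : G.edgeSet = ∅
    · haveI hinf : Infinite V := not_finite_iff_infinite.mp (fun hfin => (h1 hfin).ne_empty hE)
      exact h (realize_null G h2 hE)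
    · obtain ⟨e, he⟩ := Set.nonempty_iff_ne_empty.mpr hE
      revert he
      induction e using Sym2.ind with
      | _ u₀ w₀ =>
        intro he
        exact h (realize_one_edge G h2 (G.mem_edgeSet.mp he) h3)
  · rintro hR ⟨X, d, A, B, hmet, hsr, hdisj, hA0, hB0, hpA, hpB, f, hf⟩
    obtain ⟨a₀, ha₀⟩ := hA0
    obtain ⟨b₀, hb₀⟩ := hB0
    -- the proximinal graph of a strongly rigid space has at most one edge
    have key : ∀ u w u' w' : V, G.Adj u w → G.Adj u' w' →
        (s(u, w) : Sym2 V) = s(u', w') := by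
      intro u w u' w' h h'
      obtain ⟨hc, hd⟩ := (hf u w).mp h
      obtain ⟨hc', hd'⟩ := (hf u' w').mp h'
      have hne : ((f u : X)) ≠ (f w : X) := by
        rcases hc with ⟨ha, hb⟩ | ⟨ha, hb⟩
        · exact hdisj.ne_of_mem ha hb
        · exact (hdisj.ne_of_mem hb ha).symm
      have hpair := hsr _ _ _ _ hne (hd.trans hd'.symm)
      rcases Set.pair_eq_pair_iff.mp hpair with ⟨e1, e2⟩ | ⟨e1, e2⟩
      · have hu : u = u' := f.injective (Subtype.coe_injective e1)
        have hw : w = w' := f.injective (Subtype.coe_injective e2)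
        rw [hu, hw]
      · have hu : u = w' := f.injective (Subtype.coe_injective e1)
        have hw : w = u' := f.injective (Subtype.coe_injective e2)
        rw [hu, hw, Sym2.eq_swap]
    have hsub : G.edgeSet.Subsingleton := by
      rintro e1 h1 e2 h2
      obtain ⟨⟨u, w⟩, rfl⟩ := Quot.exists_rep e1
      obtain ⟨⟨u', w'⟩, rfl⟩ := Quot.exists_rep e2
      exact key u w u' w' (G.mem_edgeSet.mp h1) (G.mem_edgeSet.mp h2)
    -- the ground set of a strongly rigid space has at most continuum many points
    have hVle : Cardinal.mk V ≤ Cardinal.continuum := by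
      classical
      have hFinj : Function.Injective (fun x : X => if x = a₀ then (-1:ℝ) else d a₀ x) := by
        intro x y hxy
        simp only at hxy
        by_cases hx : x = a₀ <;> by_cases hy : y = a₀
        · rw [hx, hy]
        · exfalso
          rw [if_pos hx, if_neg hy] at hxy
          have h1 := hmet.1.1 a₀ y
          have h2 : d a₀ y ≠ 0 := fun h0 => hy (((hmet.1.2.2 a₀ y).mp h0).symm)
          rcases lt_or_eq_of_le h1 with h3 | h3
          · linarith
          · exact h2 h3.symm
        · exfalso
          rw [if_neg hx, if_pos hy] at hxy
          have h1 := hmet.1.1 a₀ x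
          linarith
        · rw [if_neg hx, if_neg hy] at hxy
          have hax : a₀ ≠ x := fun hh => hx hh.symm
          have hpair := hsr a₀ x a₀ y hax hxy
          rcases Set.pair_eq_pair_iff.mp hpair with ⟨_, h2⟩ | ⟨h1, h2⟩
          · exact h2
          · exact h2.trans h1
      calc Cardinal.mk V = Cardinal.mk ↥(A ∪ B) := Cardinal.mk_congr f
        _ ≤ Cardinal.mk X := Cardinal.mk_subtype_le _
        _ ≤ Cardinal.continuum := by
            have h2 : Cardinal.lift.{0} (Cardinal.mk X) ≤ Cardinal.lift.{u} (Cardinal.mk ℝ) :=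
              Cardinal.lift_mk_le'.mpr ⟨⟨_, hFinj⟩⟩
            rw [Cardinal.mk_real, Cardinal.lift_continuum, Cardinal.lift_id'] at h2
            exact h2
    rcases hR with ⟨hfin, hnull⟩ | hbig | hmulti
    · -- a finite nonnull graph: the infimum is attained, giving an edge
      have hABfin : (A ∪ B).Finite := Set.finite_coe_iff.mp (Finite.of_equiv V f)
      have hSfin : {r | ∃ a ∈ A, ∃ b ∈ B, d a b = r}.Finite := by
        have hEq : {r | ∃ a ∈ A, ∃ b ∈ B, d a b = r} = Set.image2 d A B := by
          ext r; simp [Set.mem_image2]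
        rw [hEq]
        exact Set.Finite.image2 d (hABfin.subset Set.subset_union_left)
          (hABfin.subset Set.subset_union_right)
      have hSne : {r | ∃ a ∈ A, ∃ b ∈ B, d a b = r}.Nonempty :=
        ⟨d a₀ b₀, a₀, ha₀, b₀, hb₀, rfl⟩
      obtain ⟨a, ha, b, hb, hab⟩ := hSne.csInf_mem hSfin
      have hfu : ((f (f.symm ⟨a, Set.mem_union_left _ ha⟩) : X)) = a := by
        rw [Equiv.apply_symm_apply]
      have hfw : ((f (f.symm ⟨b, Set.mem_union_right _ hb⟩) : X)) = b := by
        rw [Equiv.apply_symm_apply]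
      have hAdj : G.Adj (f.symm ⟨a, Set.mem_union_left _ ha⟩)
          (f.symm ⟨b, Set.mem_union_right _ hb⟩) :=
        (hf _ _).mpr ⟨Or.inl ⟨by rw [hfu]; exact ha, by rw [hfw]; exact hb⟩,
          by rw [hfu, hfw, sDist]; exact hab⟩
      have hmem := G.mem_edgeSet.mpr hAdj
      rw [hnull] at hmem
      exact Set.notMem_empty _ hmem
    · exact absurd hbig (not_lt.mpr hVle)
    · exact hmulti hsub
end

section
/- Let G be a bipartite graph with fixed parts A and B that is proximinal for some weakly rigid semimetric space (X,d) (i.e., A and B are disjoint proximinal subsets of X and, for all a ∈ A and b ∈ B, {a,b} is an edge of G if and only if d(a,b) = dist(A,B)). Then the cardinality of the vertex set of G is at most the cardinality 𝔠 of the continuum, every vertex of G has degree at most 1, and if G has no edges then both A and B are infinite. -/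
open Set

universe u v

lemma encard_three {X : Type u} {p x y : X} (hpx : p ≠ x) (hpy : p ≠ y) (hxy : x ≠ y) :
    ({p, x, y} : Set X).encard = 3 := by
  rw [Set.encard_insert_of_notMem (by simp [hpx, hpy]),
    Set.encard_insert_of_notMem (by simp [hxy]), Set.encard_singleton]
  rfl

lemma rigid_key {X : Type u} (d : X → X → ℝ) (hd : IsSemimetric d) (hwr : WeaklyRigid d)
    {p x y : X} (hpx : p ≠ x) (hpy : p ≠ y) (h : d p x = d p y) : x = y := by
  by_cases hxy : x = y
  · exact hxy
  · have h3 := encard_three hpx hpy hxy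
    have key := hwr _ h3 p (by simp) x (by simp) p (by simp) y (by simp) hpx h
    have hx : x ∈ ({p, y} : Set X) := key ▸ (by simp : x ∈ ({p, x} : Set X))
    rcases hx with hx | hx
    · exact absurd hx.symm hpx
    · exact hx

lemma exists_min_pDist {X : Type u} (d : X → X → ℝ) (hd0 : ∀ x y, 0 ≤ d x y)
    (A B : Set X) (hAfin : A.Finite) (hAne : A.Nonempty) (hBne : B.Nonempty) :
    ∃ a ∈ A, pDist d a B = sDist d A B := by
  have hSbdd : BddBelow {r | ∃ a ∈ A, ∃ b ∈ B, d a b = r} :=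
    ⟨0, by rintro r ⟨a, _, b, _, rfl⟩; exact hd0 a b⟩
  have hSabdd : ∀ a : X, BddBelow {r | ∃ b ∈ B, d a b = r} :=
    fun a => ⟨0, by rintro r ⟨b, _, rfl⟩; exact hd0 a b⟩
  obtain ⟨a₀, ha₀, hmin⟩ := Set.exists_min_image A (fun a => pDist d a B) hAfin hAne
  obtain ⟨b₀, hb₀⟩ := hBne
  refine ⟨a₀, ha₀, le_antisymm ?_ ?_⟩
  · refine le_csInf ⟨d a₀ b₀, a₀, ha₀, b₀, hb₀, rfl⟩ ?_
    rintro r ⟨a, ha, b, hb, rfl⟩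
    exact le_trans (hmin a ha) (csInf_le (hSabdd a) ⟨b, hb, rfl⟩)
  · refine le_csInf ⟨d a₀ b₀, b₀, hb₀, rfl⟩ ?_
    rintro r ⟨b, hb, rfl⟩
    exact csInf_le hSbdd ⟨a₀, ha₀, b, hb, rfl⟩

/-- If a bipartite graph with parts `A`, `B` is proximinal for a weakly rigid
semimetric space, then it has at most continuum many vertices, every vertex has degree at most
one, and if it is null then `A` and `B` are infinite. -/
theorem stmt_5 {X : Type u} (d : X → X → ℝ) (hd : IsSemimetric d) (hwr : WeaklyRigid d)
    (A B : Set X) (hAne : A.Nonempty) (hBne : B.Nonempty)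
    (hdisj : Disjoint A B) (hA : Proximinal d A) (hB : Proximinal d B) :
    Cardinal.mk ↥(A ∪ B) ≤ Cardinal.continuum ∧
    (∀ a ∈ A, ∀ b₁ ∈ B, ∀ b₂ ∈ B,
      d a b₁ = sDist d A B → d a b₂ = sDist d A B → b₁ = b₂) ∧
    (∀ b ∈ B, ∀ a₁ ∈ A, ∀ a₂ ∈ A,
      d a₁ b = sDist d A B → d a₂ b = sDist d A B → a₁ = a₂) ∧
    ((∀ a ∈ A, ∀ b ∈ B, d a b ≠ sDist d A B) → A.Infinite ∧ B.Infinite) := by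
  obtain ⟨p, hp⟩ := hAne
  have hd0 := hd.1
  have hsymm := hd.2.1
  have heq0 := hd.2.2
  have hAB : ∀ a ∈ A, ∀ b ∈ B, a ≠ b := by
    intro a ha b hb h
    exact Set.disjoint_left.mp hdisj ha (h ▸ hb)
  refine ⟨?_, ?_, ?_, ?_⟩
  · have hinj : Function.Injective (fun x : ↥(A ∪ B) => d p x.1) := by
      intro x y hxy
      simp only at hxy
      apply Subtype.ext
      by_cases hx : p = x.1
      · by_cases hy : p = y.1
        · exact hx ▸ hy.symm ▸ rfl
        · exact absurd ((heq0 p y.1).mp (by rw [← hxy, ← hx, (heq0 p p).mpr rfl])) hy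
      · by_cases hy : p = y.1
        · exact absurd ((heq0 p x.1).mp (by rw [hxy, ← hy, (heq0 p p).mpr rfl])) hx
        · exact rigid_key d hd hwr hx hy hxy
    have h := Cardinal.lift_mk_le'.mpr ⟨⟨fun x : ↥(A ∪ B) => d p x.1, hinj⟩⟩
    rwa [Cardinal.mk_real, Cardinal.lift_continuum, Cardinal.lift_uzero] at h
  · intro a ha b₁ hb₁ b₂ hb₂ h1 h2
    exact rigid_key d hd hwr (hAB a ha b₁ hb₁) (hAB a ha b₂ hb₂) (h1.trans h2.symm)
  · intro b hb a₁ ha₁ a₂ ha₂ h1 h2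
    have h1' : d b a₁ = d b a₂ := by rw [hsymm b a₁, hsymm b a₂, h1, h2]
    exact rigid_key d hd hwr (Ne.symm (hAB a₁ ha₁ b hb)) (Ne.symm (hAB a₂ ha₂ b hb)) h1'
  · intro hnoedge
    have hsDistsymm : sDist d B A = sDist d A B := by
      unfold sDist
      congr 1
      ext r
      constructor
      · rintro ⟨b, hb, a, ha, rfl⟩; exact ⟨a, ha, b, hb, (hsymm a b)⟩
      · rintro ⟨a, ha, b, hb, rfl⟩; exact ⟨b, hb, a, ha, (hsymm b a)⟩
    constructor
    · intro hAfin
      obtain ⟨a, ha, hpd⟩ := exists_min_pDist d hd0 A B hAfin ⟨p, hp⟩ hBne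
      obtain ⟨b, hb, hdb⟩ := hB a
      exact hnoedge a ha b hb (hdb.trans hpd)
    · intro hBfin
      obtain ⟨b, hb, hpd⟩ := exists_min_pDist d hd0 B A hBfin hBne ⟨p, hp⟩
      obtain ⟨a, ha, hda⟩ := hA b
      exact hnoedge a ha b hb ((hsymm a b).trans (hda.trans (hpd.trans hsDistsymm)))
end

section
/- Let G be a bipartite graph with fixed parts A and B such that the cardinality of V(G) is at most the cardinality 𝔠 of the continuum, every vertex of G has degree at most 1, and if G has no edges then both A and B are infinite. Then there exists a weakly rigid metric d on X = A ∪ B such that A and B are disjoint proximinal subsets of (X,d) and, for all a ∈ A and b ∈ B, {a,b} is an edge of G if and only if d(a,b) = dist(A,B). -/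
open Set

universe u v

section AuxRigid

variable {V : Type u}

/-- `x` is matched in the edge set `E`. -/
def MatchedIn (E : Set (V × V)) (x : V) : Prop := ∃ y, (x, y) ∈ E ∨ (y, x) ∈ E

open Classical in
/-- Auxiliary distance function. -/
noncomputable def auxD (A : Set V) (E : Set (V × V)) (f : V → ℝ) (p : V → V)
    (x y : V) : ℝ :=
  if x = y then 0
  else if x ∈ A ↔ y ∈ A then 5/2 + (f x + f y)
  else if (x, y) ∈ E ∨ (y, x) ∈ E then 19/10
  else if y = p x ∨ x = p y then 19/10 + (f x + f y)
  else 2 + (f x + f y)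

variable {A : Set V} {E : Set (V × V)} {f : V → ℝ} {p : V → V}

lemma auxD_self (x : V) : auxD A E f p x x = 0 := by
  unfold auxD; rw [if_pos rfl]

lemma auxD_shape {x y : V} (h : x ≠ y) :
    (¬(x ∈ A ↔ y ∈ A) ∧ ((x, y) ∈ E ∨ (y, x) ∈ E) ∧ auxD A E f p x y = 19/10) ∨
    ((y = p x ∨ x = p y) ∧ auxD A E f p x y = 19/10 + (f x + f y)) ∨
    auxD A E f p x y = 2 + (f x + f y) ∨
    ((x ∈ A ↔ y ∈ A) ∧ auxD A E f p x y = 5/2 + (f x + f y)) := by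
  unfold auxD
  rw [if_neg h]
  split_ifs with h1 h2 h3
  · exact Or.inr (Or.inr (Or.inr ⟨h1, rfl⟩))
  · exact Or.inl ⟨h1, h2, rfl⟩
  · exact Or.inr (Or.inl ⟨h3, rfl⟩)
  · exact Or.inr (Or.inr (Or.inl rfl))

lemma auxD_symm (x y : V) : auxD A E f p x y = auxD A E f p y x := by
  unfold auxD
  rcases eq_or_ne x y with rfl | h
  · simp
  rw [if_neg h, if_neg (Ne.symm h)]
  by_cases h1 : x ∈ A ↔ y ∈ A
  · rw [if_pos h1, if_pos h1.symm]; ring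
  have h1' : ¬(y ∈ A ↔ x ∈ A) := fun hh => h1 hh.symm
  rw [if_neg h1, if_neg h1']
  by_cases h2 : (x, y) ∈ E ∨ (y, x) ∈ E
  · rw [if_pos h2, if_pos h2.symm]
  have h2' : ¬((y, x) ∈ E ∨ (x, y) ∈ E) := fun hh => h2 hh.symm
  rw [if_neg h2, if_neg h2']
  by_cases h3 : y = p x ∨ x = p y
  · rw [if_pos h3, if_pos h3.symm]; ring
  have h3' : ¬(x = p y ∨ y = p x) := fun hh => h3 hh.symm
  rw [if_neg h3, if_neg h3']; ring

theorem auxMain {V : Type u} (A B : Set V) (hAne : A.Nonempty) (hBne : B.Nonempty)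
    (hdisj : Disjoint A B) (hcover : A ∪ B = Set.univ)
    (E : Set (V × V)) (hE : E ⊆ A ×ˢ B)
    (hdegA : ∀ a ∈ A, ∀ b₁ ∈ B, ∀ b₂ ∈ B, (a, b₁) ∈ E → (a, b₂) ∈ E → b₁ = b₂)
    (hdegB : ∀ b ∈ B, ∀ a₁ ∈ A, ∀ a₂ ∈ A, (a₁, b) ∈ E → (a₂, b) ∈ E → a₁ = a₂)
    (f : V → ℝ) (p : V → V)
    (hf0 : ∀ x, 0 < f x) (hf1 : ∀ x, f x ≤ 1/200)
    (hfinj : Function.Injective f)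
    (hpA : ∀ x ∈ A, p x ∈ B) (hpB : ∀ x ∈ B, p x ∈ A)
    (hC : ∀ x, ¬ MatchedIn E x → f (p x) < f x)
    (hCm : ∀ x, MatchedIn E x → MatchedIn E (p x))
    (hD : E.Nonempty ∨ ∀ ε > 0, ∃ a ∈ A, ¬ MatchedIn E a ∧ f a < ε) :
    ∃ d : V → V → ℝ, IsMetricD d ∧ WeaklyRigid d ∧ Proximinal d A ∧ Proximinal d B ∧
      ∀ a ∈ A, ∀ b ∈ B, ((a, b) ∈ E ↔ d a b = sDist d A B) := by
  classical
  obtain ⟨a₀, ha₀⟩ := hAne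
  obtain ⟨b₀, hb₀⟩ := hBne
  set d : V → V → ℝ := auxD A E f p with hd
  have hmemAB : ∀ x : V, x ∈ A ∨ x ∈ B := fun x => by
    have : x ∈ A ∪ B := by rw [hcover]; exact Set.mem_univ x
    exact this
  have hAnB : ∀ x, x ∈ A → x ∉ B := fun x hx => Set.disjoint_left.1 hdisj hx
  have hneAB : ∀ x ∈ A, ∀ y ∈ B, x ≠ y := by
    rintro x hx y hy rfl; exact hAnB x hx hy
  have hiffAB : ∀ x ∈ A, ∀ y ∈ B, ¬(x ∈ A ↔ y ∈ A) := by
    intro x hx y hy h; exact hAnB y (h.mp hx) hy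
  have hiffBA : ∀ x ∈ B, ∀ y ∈ A, ¬(x ∈ A ↔ y ∈ A) := by
    intro x hx y hy h; exact hAnB x (h.mpr hy) hx
  have hsymm : ∀ x y, d x y = d y x := fun x y => auxD_symm x y
  have hself : ∀ x, d x x = 0 := fun x => auxD_self x
  -- evaluation on edges
  have hedge : ∀ {x y : V}, (x, y) ∈ E → d x y = 19/10 := by
    intro x y he
    have hx : x ∈ A := (hE he).1
    have hy : y ∈ B := (hE he).2
    show auxD A E f p x y = 19/10
    unfold auxD
    rw [if_neg (hneAB x hx y hy), if_neg (hiffAB x hx y hy), if_pos (Or.inl he)]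
  -- evaluation on special pairs
  have hspc : ∀ {x y : V}, x ≠ y → ¬(x ∈ A ↔ y ∈ A) → ¬ MatchedIn E x →
      (y = p x ∨ x = p y) → d x y = 19/10 + (f x + f y) := by
    intro x y hne hiff hm hsp
    show auxD A E f p x y = 19/10 + (f x + f y)
    unfold auxD
    have hE' : ¬((x, y) ∈ E ∨ (y, x) ∈ E) := fun h => hm ⟨y, h⟩
    rw [if_neg hne, if_neg hiff, if_neg hE', if_pos hsp]
  -- range bounds
  have hrlow : ∀ x y, x ≠ y → 19/10 ≤ d x y := by
    intro x y h
    have h0x := hf0 x; have h0y := hf0 y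
    rcases auxD_shape (A := A) (E := E) (f := f) (p := p) h with ⟨_, _, h3⟩ | ⟨_, h3⟩ | h3 | ⟨_, h3⟩ <;>
      rw [show d x y = auxD A E f p x y from rfl, h3] <;> linarith
  have hrhigh : ∀ x y, x ≠ y → d x y ≤ 26/10 := by
    intro x y h
    have h1x := hf1 x; have h1y := hf1 y
    rcases auxD_shape (A := A) (E := E) (f := f) (p := p) h with ⟨_, _, h3⟩ | ⟨_, h3⟩ | h3 | ⟨_, h3⟩ <;>
      rw [show d x y = auxD A E f p x y from rfl, h3] <;> linarith
  have hnonneg : ∀ x y, 0 ≤ d x y := by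
    intro x y
    rcases eq_or_ne x y with rfl | h
    · rw [hself]
    · linarith [hrlow x y h]
  have hzero : ∀ x y, d x y = 0 ↔ x = y := by
    intro x y
    constructor
    · intro h0
      by_contra h
      have := hrlow x y h; linarith
    · rintro rfl; exact hself x
  have htri : ∀ x y z, d x y ≤ d x z + d z y := by
    intro x y z
    rcases eq_or_ne x y with rfl | hxy
    · rw [hself]; exact add_nonneg (hnonneg x z) (hnonneg z x)
    by_cases hxz : x = z
    · rw [← hxz, hself, zero_add]
    by_cases hzy : z = y
    · rw [hzy, hself, add_zero]
    have := hrhigh x y hxy; have := hrlow x z hxz; have := hrlow z y hzy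
    linarith
  -- key injectivity for pairs sharing a point
  have hkey : ∀ x y v : V, x ≠ y → x ≠ v → d x y = d x v → y = v := by
    intro x y v hxy hxv he
    have h0y := hf0 y; have h0v := hf0 v; have h1y := hf1 y; have h1v := hf1 v
    have h0x := hf0 x; have h1x := hf1 x
    have he' : auxD A E f p x y = auxD A E f p x v := he
    rcases auxD_shape (A := A) (E := E) (f := f) (p := p) hxy with ⟨i1, i2, i3⟩ | ⟨i2, i3⟩ | i3 | ⟨i2, i3⟩ <;>
      rcases auxD_shape (A := A) (E := E) (f := f) (p := p) hxv with ⟨j1, j2, j3⟩ | ⟨j2, j3⟩ | j3 | ⟨j2, j3⟩ <;>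
      rw [i3, j3] at he'
    · -- both edges
      rcases i2 with i2 | i2 <;> rcases j2 with j2 | j2
      · exact hdegA x (hE i2).1 y (hE i2).2 v (hE j2).2 i2 j2
      · exact absurd (hE i2).1 (fun h => hAnB x h (hE j2).2)
      · exact absurd (hE j2).1 (fun h => hAnB x h (hE i2).2)
      · exact hdegB x (hE i2).2 y (hE i2).1 v (hE j2).1 i2 j2
    all_goals first
      | (exact hfinj (by linarith : f y = f v))
      | (exfalso; linarith)
  -- weak rigidity
  have hWR : WeaklyRigid d := by
    intro S hS x hx y hy u hu v hv hxy he
    have huv : u ≠ v := by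
      rintro rfl
      rw [hself] at he
      have := hrlow x y hxy
      linarith
    by_cases hux : u = x
    · subst hux
      have := hkey u y v hxy (fun h => huv h) he
      rw [this]
    by_cases huy : u = y
    · subst huy
      rw [hsymm x u] at he
      have := hkey u x v (Ne.symm hxy) huv he
      rw [← this]
      exact Set.pair_comm x u
    by_cases hvx : v = x
    · subst hvx
      rw [hsymm u v] at he
      have := hkey v y u hxy (Ne.symm hux) he
      rw [this]
      exact Set.pair_comm v u
    by_cases hvy : v = y
    · subst hvy
      rw [hsymm x v, hsymm u v] at he
      have := hkey v x u (Ne.symm hxy) (Ne.symm huy) he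
      rw [← this]
    exfalso
    have hsub : ({x, y, u, v} : Set V) ⊆ S := by
      rw [Set.insert_subset_iff, Set.insert_subset_iff, Set.insert_subset_iff,
        Set.singleton_subset_iff]
      exact ⟨hx, hy, hu, hv⟩
    have h4 : ({x, y, u, v} : Set V).encard = 4 := by
      rw [Set.encard_insert_of_notMem, Set.encard_insert_of_notMem,
        Set.encard_insert_of_notMem, Set.encard_singleton]
      · rfl
      · simp only [Set.mem_singleton_iff]; exact huv
      · simp only [Set.mem_insert_iff, Set.mem_singleton_iff]
        push_neg
        exact ⟨fun h => huy h.symm, fun h => hvy h.symm⟩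
      · simp only [Set.mem_insert_iff, Set.mem_singleton_iff]
        push_neg
        exact ⟨hxy, fun h => hux h.symm, fun h => hvx h.symm⟩
    have hle := Set.encard_le_encard hsub
    rw [h4, hS] at hle
    norm_num at hle
  -- minimality principle
  have hmin : ∀ (S : Set V) (x a₁ : V), a₁ ∈ S → (∀ a ∈ S, d x a₁ ≤ d x a) →
      d x a₁ = pDist d x S := by
    intro S x a₁ h1 h2
    have hbdd : BddBelow {r | ∃ a ∈ S, d x a = r} := by
      refine ⟨0, ?_⟩
      rintro r ⟨a, _, rfl⟩
      exact hnonneg x a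
    unfold pDist
    apply le_antisymm
    · refine le_csInf ⟨d x a₁, a₁, h1, rfl⟩ ?_
      rintro r ⟨a, ha, rfl⟩
      exact h2 a ha
    · exact csInf_le hbdd ⟨a₁, h1, rfl⟩
  -- value at unmatched points to p
  have hval_p : ∀ x, ¬ MatchedIn E x → d x (p x) = 19/10 + (f x + f (p x)) := by
    intro x hm
    rcases hmemAB x with hx | hx
    · exact hspc (hneAB x hx (p x) (hpA x hx)) (hiffAB x hx (p x) (hpA x hx)) hm (Or.inl rfl)
    · exact hspc (Ne.symm (hneAB (p x) (hpB x hx) x hx)) (hiffBA x hx (p x) (hpB x hx)) hm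
        (Or.inl rfl)
  -- the distance from an unmatched point to anything on the other side is ≥ dist to p x
  have hbest : ∀ x, ¬ MatchedIn E x → ∀ a, x ≠ a → d x (p x) ≤ d x a := by
    intro x hm a hxa
    have h0px := hf0 (p x); have h1px := hf1 (p x)
    have h0a := hf0 a; have h0x := hf0 x
    rw [hval_p x hm]
    rcases auxD_shape (A := A) (E := E) (f := f) (p := p) hxa with ⟨i1, i2, i3⟩ | ⟨i2, i3⟩ | i3 | ⟨i2, i3⟩ <;>
        rw [show d x a = auxD A E f p x a from rfl, i3]
    · exact absurd ⟨a, i2⟩ hm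
    · rcases i2 with i2 | i2
      · rw [← i2]
      · have hma : ¬ MatchedIn E a := by
          intro hma
          have := hCm a hma
          rw [← i2] at this
          exact hm this
        have h1 := hC a hma
        have h2 := hC x hm
        rw [← i2] at h1
        linarith
    · linarith
    · linarith
  -- proximinality of A
  have hproxA : Proximinal d A := by
    intro x
    rcases hmemAB x with hx | hx
    · refine ⟨x, hx, hmin A x x hx ?_⟩
      intro a _
      rw [hself]
      exact hnonneg x a
    · by_cases hm : MatchedIn E x
      · obtain ⟨y, hy | hy⟩ := hm
        · exact absurd (hE hy).1 (fun h => hAnB x h hx)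
        · have hyA : y ∈ A := (hE hy).1
          refine ⟨y, hyA, hmin A x y hyA ?_⟩
          intro a ha
          have hdxy : d x y = 19/10 := by rw [hsymm]; exact hedge hy
          rw [hdxy]
          exact hrlow x a (Ne.symm (hneAB a ha x hx))
      · refine ⟨p x, hpB x hx, hmin A x (p x) (hpB x hx) ?_⟩
        intro a ha
        exact hbest x hm a (Ne.symm (hneAB a ha x hx))
  -- proximinality of B
  have hproxB : Proximinal d B := by
    intro x
    rcases hmemAB x with hx | hx
    · by_cases hm : MatchedIn E x
      · obtain ⟨y, hy | hy⟩ := hm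
        · have hyB : y ∈ B := (hE hy).2
          refine ⟨y, hyB, hmin B x y hyB ?_⟩
          intro b hb
          rw [hedge hy]
          exact hrlow x b (hneAB x hx b hb)
        · exact absurd (hE hy).2 (hAnB x hx)
      · refine ⟨p x, hpA x hx, hmin B x (p x) (hpA x hx) ?_⟩
        intro b hb
        exact hbest x hm b (hneAB x hx b hb)
    · refine ⟨x, hx, hmin B x x hx ?_⟩
      intro b _
      rw [hself]
      exact hnonneg x b
  -- the infimum distance between A and B
  have hSne : {r | ∃ a ∈ A, ∃ b ∈ B, d a b = r}.Nonempty := ⟨d a₀ b₀, a₀, ha₀, b₀, hb₀, rfl⟩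
  have hSbdd : BddBelow {r | ∃ a ∈ A, ∃ b ∈ B, d a b = r} := by
    refine ⟨19/10, ?_⟩
    rintro r ⟨a, ha, b, hb, rfl⟩
    exact hrlow a b (hneAB a ha b hb)
  have hsd : sDist d A B = 19/10 := by
    unfold sDist
    apply le_antisymm
    · rcases hD with ⟨⟨a, b⟩, he⟩ | hD'
      · exact csInf_le hSbdd ⟨a, (hE he).1, b, (hE he).2, hedge he⟩
      · rw [Real.sInf_le_iff hSbdd hSne]
        intro ε hε
        obtain ⟨a, ha, hma, hfa⟩ := hD' (ε/2) (by linarith)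
        refine ⟨d a (p a), ⟨a, ha, p a, hpA a ha, rfl⟩, ?_⟩
        rw [hval_p a hma]
        have := hC a hma
        linarith
    · apply le_csInf hSne
      rintro r ⟨a, ha, b, hb, rfl⟩
      exact hrlow a b (hneAB a ha b hb)
  -- the edge characterization
  have hiff : ∀ a ∈ A, ∀ b ∈ B, ((a, b) ∈ E ↔ d a b = sDist d A B) := by
    intro a ha b hb
    rw [hsd]
    constructor
    · exact hedge
    · intro he
      have h0a := hf0 a; have h0b := hf0 b
      rcases auxD_shape (A := A) (E := E) (f := f) (p := p) (hneAB a ha b hb) with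
        ⟨i1, i2, i3⟩ | ⟨i2, i3⟩ | i3 | ⟨i2, i3⟩
      · rcases i2 with i2 | i2
        · exact i2
        · exact absurd (hE i2).1 (fun h => hAnB b h hb)
      · rw [show d a b = auxD A E f p a b from rfl, i3] at he; exfalso; linarith
      · rw [show d a b = auxD A E f p a b from rfl, i3] at he; exfalso; linarith
      · rw [show d a b = auxD A E f p a b from rfl, i3] at he; exfalso; linarith
  exact ⟨d, ⟨⟨hnonneg, hsymm, hzero⟩, htri⟩, hWR, hproxA, hproxB, hiff⟩

end AuxRigid

/-- Any bipartite graph with parts `A`, `B`, at most continuum many vertices,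
all degrees at most one, which is infinite on both parts if it is null, is proximinal for
some weakly rigid metric on `X = A ∪ B`. -/
theorem stmt_6 {V : Type u} (A B : Set V) (hAne : A.Nonempty) (hBne : B.Nonempty)
    (hdisj : Disjoint A B) (hcover : A ∪ B = Set.univ)
    (E : Set (V × V)) (hE : E ⊆ A ×ˢ B)
    (hdegA : ∀ a ∈ A, ∀ b₁ ∈ B, ∀ b₂ ∈ B, (a, b₁) ∈ E → (a, b₂) ∈ E → b₁ = b₂)
    (hdegB : ∀ b ∈ B, ∀ a₁ ∈ A, ∀ a₂ ∈ A, (a₁, b) ∈ E → (a₂, b) ∈ E → a₁ = a₂)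
    (hcard : Cardinal.mk V ≤ Cardinal.continuum)
    (hnull : E = ∅ → A.Infinite ∧ B.Infinite) :
    ∃ d : V → V → ℝ, IsMetricD d ∧ WeaklyRigid d ∧
      Proximinal d A ∧ Proximinal d B ∧
      ∀ a ∈ A, ∀ b ∈ B, ((a, b) ∈ E ↔ d a b = sDist d A B) := by
  classical
  have hemb : ∀ r1 r2 : ℝ, r1 < r2 → ∃ j : V → ℝ, Function.Injective j ∧
      ∀ x, j x ∈ Set.Ioo r1 r2 := by
    intro r1 r2 h12
    have h1 : Cardinal.lift.{0} (Cardinal.mk V) ≤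
        Cardinal.lift.{u} (Cardinal.mk (Set.Ioo r1 r2)) := by
      rw [Cardinal.mk_Ioo_real h12]
      calc Cardinal.lift.{0} (Cardinal.mk V) ≤ Cardinal.lift.{0} Cardinal.continuum :=
            Cardinal.lift_le.mpr hcard
        _ = Cardinal.continuum := Cardinal.lift_continuum
        _ = Cardinal.lift.{u} Cardinal.continuum := Cardinal.lift_continuum.symm
    obtain ⟨e⟩ := Cardinal.lift_mk_le'.mp h1
    exact ⟨fun x => (e x : ℝ), fun a b h => e.injective (Subtype.ext h), fun x => (e x).2⟩
  by_cases hE0 : E = ∅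
  · -- the null graph case
    obtain ⟨hAinf, hBinf⟩ := hnull hE0
    subst hE0
    have hnm : ∀ x : V, ¬ MatchedIn (∅ : Set (V × V)) x := by
      rintro x ⟨y, h | h⟩ <;> exact absurd h (Set.notMem_empty _)
    obtain ⟨j, hjinj, hjmem⟩ := hemb (1/500) (1/200) (by norm_num)
    have hjl : ∀ x, 1/500 < j x := fun x => (Set.mem_Ioo.mp (hjmem x)).1
    have hjr : ∀ x, j x < 1/200 := fun x => (Set.mem_Ioo.mp (hjmem x)).2
    set gA : ℕ → V := fun n => ((Set.Infinite.natEmbedding A hAinf) n : V) with hgA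
    set gB : ℕ → V := fun n => ((Set.Infinite.natEmbedding B hBinf) n : V) with hgB
    have hgAinj : Function.Injective gA := fun a b h =>
      (Set.Infinite.natEmbedding A hAinf).injective (Subtype.ext h)
    have hgBinj : Function.Injective gB := fun a b h =>
      (Set.Infinite.natEmbedding B hBinf).injective (Subtype.ext h)
    have hgAA : ∀ n, gA n ∈ A := fun n => ((Set.Infinite.natEmbedding A hAinf) n).2
    have hgBB : ∀ n, gB n ∈ B := fun n => ((Set.Infinite.natEmbedding B hBinf) n).2
    have hgAB : ∀ n m, gA n ≠ gB m := by
      intro n m h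
      exact Set.disjoint_left.1 hdisj (hgAA n) (h ▸ hgBB m)
    set vA : ℕ → ℝ := fun n => 1/(1000*(2*(n:ℝ)+1)) with hvA
    set vB : ℕ → ℝ := fun n => 1/(1000*(2*(n:ℝ)+2)) with hvB
    have hdenA : ∀ n : ℕ, (0:ℝ) < 1000*(2*(n:ℝ)+1) := by
      intro n; positivity
    have hdenB : ∀ n : ℕ, (0:ℝ) < 1000*(2*(n:ℝ)+2) := by
      intro n; positivity
    have hvA_pos : ∀ n, 0 < vA n := by
      intro n; rw [hvA]; exact div_pos one_pos (hdenA n)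
    have hvB_pos : ∀ n, 0 < vB n := by
      intro n; rw [hvB]; exact div_pos one_pos (hdenB n)
    have hone_div : ∀ c e : ℝ, 0 < c → c < e → 1/e < 1/c := by
      intro c e hc hce
      exact one_div_lt_one_div_of_lt hc hce
    have hvA_le : ∀ n, vA n ≤ 1/1000 := by
      intro n
      rw [hvA]
      rw [div_le_div_iff₀ (hdenA n) (by norm_num)]
      have : (0:ℝ) ≤ (n:ℝ) := Nat.cast_nonneg n
      nlinarith
    have hvB_le : ∀ n, vB n ≤ 1/1000 := by
      intro n
      rw [hvB]
      rw [div_le_div_iff₀ (hdenB n) (by norm_num)]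
      have : (0:ℝ) ≤ (n:ℝ) := Nat.cast_nonneg n
      nlinarith
    have hvBA : ∀ n, vB n < vA n := by
      intro n
      rw [hvA, hvB]
      apply hone_div _ _ (hdenA n)
      have : (0:ℝ) ≤ (n:ℝ) := Nat.cast_nonneg n
      nlinarith
    have hvAB : ∀ n, vA (n+1) < vB n := by
      intro n
      rw [hvA, hvB]
      apply hone_div _ _ (hdenB n)
      push_cast
      nlinarith [Nat.cast_nonneg (α := ℝ) n]
    set f : V → ℝ := fun x =>
      if h : ∃ m, gA m = x then vA h.choose
      else if h : ∃ m, gB m = x then vB h.choose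
      else j x with hf
    have hfgA : ∀ n, f (gA n) = vA n := by
      intro n
      have hex : ∃ m, gA m = gA n := ⟨n, rfl⟩
      simp only [hf]
      rw [dif_pos hex]
      exact congrArg vA (hgAinj hex.choose_spec)
    have hfgB : ∀ n, f (gB n) = vB n := by
      intro n
      have hex : ∃ m, gB m = gB n := ⟨n, rfl⟩
      have hnex : ¬ ∃ m, gA m = gB n := by
        rintro ⟨m, hm⟩; exact hgAB m n hm
      simp only [hf]
      rw [dif_neg hnex, dif_pos hex]
      exact congrArg vB (hgBinj hex.choose_spec)
    have hfo : ∀ x, (¬ ∃ m, gA m = x) → (¬ ∃ m, gB m = x) → f x = j x := by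
      intro x h1 h2
      simp only [hf]
      rw [dif_neg h1, dif_neg h2]
    have hf0 : ∀ x, 0 < f x := by
      intro x
      by_cases h1 : ∃ m, gA m = x
      · obtain ⟨m, rfl⟩ := h1; rw [hfgA]; exact hvA_pos m
      by_cases h2 : ∃ m, gB m = x
      · obtain ⟨m, rfl⟩ := h2; rw [hfgB]; exact hvB_pos m
      · rw [hfo x h1 h2]; linarith [hjl x]
    have hf1 : ∀ x, f x ≤ 1/200 := by
      intro x
      by_cases h1 : ∃ m, gA m = x
      · obtain ⟨m, rfl⟩ := h1; rw [hfgA]; linarith [hvA_le m]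
      by_cases h2 : ∃ m, gB m = x
      · obtain ⟨m, rfl⟩ := h2; rw [hfgB]; linarith [hvB_le m]
      · rw [hfo x h1 h2]; linarith [hjr x]
    have hAB_eqn : ∀ n m : ℕ, vA n ≠ vB m := by
      intro n m h
      rw [hvA, hvB] at h
      have h2 := (div_eq_div_iff (hdenA n).ne' (hdenB m).ne').mp h
      have : 2*(m:ℝ) + 2 = 2*(n:ℝ) + 1 := by nlinarith
      have h3 : 2*m + 2 = 2*n + 1 := by exact_mod_cast this
      omega
    have hfinj : Function.Injective f := by
      intro x y h
      by_cases hx1 : ∃ m, gA m = x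
      · obtain ⟨n, rfl⟩ := hx1
        rw [hfgA] at h
        by_cases hy1 : ∃ m, gA m = y
        · obtain ⟨m, rfl⟩ := hy1
          rw [hfgA] at h
          rw [hvA] at h
          have h2 := (div_eq_div_iff (hdenA n).ne' (hdenA m).ne').mp h
          have : (n:ℝ) = m := by nlinarith
          have : n = m := by exact_mod_cast this
          rw [this]
        by_cases hy2 : ∃ m, gB m = y
        · obtain ⟨m, rfl⟩ := hy2
          rw [hfgB] at h
          exact absurd h (hAB_eqn n m)
        · rw [hfo y hy1 hy2] at h
          exfalso
          have := hvA_le n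
          linarith [hjl y]
      by_cases hx2 : ∃ m, gB m = x
      · obtain ⟨n, rfl⟩ := hx2
        rw [hfgB] at h
        by_cases hy1 : ∃ m, gA m = y
        · obtain ⟨m, rfl⟩ := hy1
          rw [hfgA] at h
          exact absurd h.symm (hAB_eqn m n)
        by_cases hy2 : ∃ m, gB m = y
        · obtain ⟨m, rfl⟩ := hy2
          rw [hfgB] at h
          rw [hvB] at h
          have h2 := (div_eq_div_iff (hdenB n).ne' (hdenB m).ne').mp h
          have : (n:ℝ) = m := by nlinarith
          have : n = m := by exact_mod_cast this
          rw [this]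
        · rw [hfo y hy1 hy2] at h
          exfalso
          have := hvB_le n
          linarith [hjl y]
      · rw [hfo x hx1 hx2] at h
        by_cases hy1 : ∃ m, gA m = y
        · obtain ⟨m, rfl⟩ := hy1
          rw [hfgA] at h
          exfalso
          have := hvA_le m
          linarith [hjl x]
        by_cases hy2 : ∃ m, gB m = y
        · obtain ⟨m, rfl⟩ := hy2
          rw [hfgB] at h
          exfalso
          have := hvB_le m
          linarith [hjl x]
        · rw [hfo y hy1 hy2] at h
          exact hjinj h
    set p : V → V := fun x =>
      if h : ∃ m, gA m = x then gB h.choose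
      else if h : ∃ m, gB m = x then gA (h.choose + 1)
      else if x ∈ A then gB 0 else gA 0 with hp
    have hpgA : ∀ n, p (gA n) = gB n := by
      intro n
      have hex : ∃ m, gA m = gA n := ⟨n, rfl⟩
      simp only [hp]
      rw [dif_pos hex]
      exact congrArg gB (hgAinj hex.choose_spec)
    have hpgB : ∀ n, p (gB n) = gA (n+1) := by
      intro n
      have hex : ∃ m, gB m = gB n := ⟨n, rfl⟩
      have hnex : ¬ ∃ m, gA m = gB n := by
        rintro ⟨m, hm⟩; exact hgAB m n hm
      simp only [hp]
      rw [dif_neg hnex, dif_pos hex]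
      exact congrArg (fun k => gA (k+1)) (hgBinj hex.choose_spec)
    have hpo : ∀ x, (¬ ∃ m, gA m = x) → (¬ ∃ m, gB m = x) →
        p x = if x ∈ A then gB 0 else gA 0 := by
      intro x h1 h2
      simp only [hp]
      rw [dif_neg h1, dif_neg h2]
    have hpA : ∀ x ∈ A, p x ∈ B := by
      intro x hx
      by_cases h1 : ∃ m, gA m = x
      · obtain ⟨m, rfl⟩ := h1; rw [hpgA]; exact hgBB m
      by_cases h2 : ∃ m, gB m = x
      · obtain ⟨m, rfl⟩ := h2
        exact absurd hx (fun hx' => Set.disjoint_left.1 hdisj hx' (hgBB m))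
      · rw [hpo x h1 h2, if_pos hx]; exact hgBB 0
    have hpB : ∀ x ∈ B, p x ∈ A := by
      intro x hx
      by_cases h1 : ∃ m, gA m = x
      · obtain ⟨m, rfl⟩ := h1
        exact absurd (hgAA m) (fun hx' => Set.disjoint_left.1 hdisj hx' hx)
      by_cases h2 : ∃ m, gB m = x
      · obtain ⟨m, rfl⟩ := h2; rw [hpgB]; exact hgAA (m+1)
      · rw [hpo x h1 h2, if_neg (fun hx' => Set.disjoint_left.1 hdisj hx' hx)]
        exact hgAA 0
    have hC : ∀ x, ¬ MatchedIn (∅ : Set (V × V)) x → f (p x) < f x := by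
      intro x _
      by_cases h1 : ∃ m, gA m = x
      · obtain ⟨m, rfl⟩ := h1; rw [hpgA, hfgB, hfgA]; exact hvBA m
      by_cases h2 : ∃ m, gB m = x
      · obtain ⟨m, rfl⟩ := h2; rw [hpgB, hfgA, hfgB]; exact hvAB m
      · rw [hpo x h1 h2, hfo x h1 h2]
        by_cases hx : x ∈ A
        · rw [if_pos hx, hfgB]
          exact lt_of_le_of_lt ((hvB_le 0).trans (by norm_num)) (hjl x)
        · rw [if_neg hx, hfgA]
          exact lt_of_le_of_lt ((hvA_le 0).trans (by norm_num)) (hjl x)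
    have hCm : ∀ x, MatchedIn (∅ : Set (V × V)) x →
        MatchedIn (∅ : Set (V × V)) (p x) := fun x hx => absurd hx (hnm x)
    have hD : (∅ : Set (V × V)).Nonempty ∨
        ∀ ε > 0, ∃ a ∈ A, ¬ MatchedIn (∅ : Set (V × V)) a ∧ f a < ε := by
      right
      intro ε hε
      obtain ⟨n, hn⟩ := exists_nat_gt (1/ε)
      refine ⟨gA n, hgAA n, hnm (gA n), ?_⟩
      rw [hfgA, hvA]
      rw [div_lt_iff₀ (hdenA n)]
      have h2 : (1:ℝ)/ε < (n:ℝ) := hn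
      have h3 : (1:ℝ) < (n:ℝ) * ε := by
        rw [div_lt_iff₀ hε] at h2
        linarith
      have h4 : (n:ℝ) ≤ 1000*(2*(n:ℝ)+1) := by nlinarith [Nat.cast_nonneg (α := ℝ) n]
      nlinarith
    exact auxMain A B hAne hBne hdisj hcover ∅ (Set.empty_subset _) hdegA hdegB f p
      hf0 hf1 hfinj hpA hpB hC hCm hD
  · -- the case with at least one edge
    obtain ⟨⟨a₁, b₁⟩, he₁⟩ := Set.nonempty_iff_ne_empty.mpr hE0
    have ha₁ : a₁ ∈ A := (hE he₁).1
    have hb₁ : b₁ ∈ B := (hE he₁).2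
    have hab : a₁ ≠ b₁ := by
      rintro rfl; exact Set.disjoint_left.1 hdisj ha₁ hb₁
    obtain ⟨j, hjinj, hjmem⟩ := hemb (1/1000) (1/500) (by norm_num)
    have hjl : ∀ x, 1/1000 < j x := fun x => (Set.mem_Ioo.mp (hjmem x)).1
    have hjr : ∀ x, j x < 1/500 := fun x => (Set.mem_Ioo.mp (hjmem x)).2
    set f : V → ℝ := fun x => if x = a₁ then 1/2000 else if x = b₁ then 1/3000 else j x
      with hf
    set p : V → V := fun x => if x ∈ A then b₁ else a₁ with hp
    have hfa : f a₁ = 1/2000 := by simp [hf]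
    have hfb : f b₁ = 1/3000 := by simp [hf, Ne.symm hab]
    have hfo : ∀ z, z ≠ a₁ → z ≠ b₁ → f z = j z := by
      intro z h1 h2
      simp only [hf]; rw [if_neg h1, if_neg h2]
    have hf0 : ∀ x, 0 < f x := by
      intro x
      by_cases h1 : x = a₁
      · rw [h1, hfa]; norm_num
      by_cases h2 : x = b₁
      · rw [h2, hfb]; norm_num
      · rw [hfo x h1 h2]; linarith [hjl x]
    have hf1 : ∀ x, f x ≤ 1/200 := by
      intro x
      by_cases h1 : x = a₁
      · rw [h1, hfa]; norm_num
      by_cases h2 : x = b₁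
      · rw [h2, hfb]; norm_num
      · rw [hfo x h1 h2]; linarith [hjr x]
    have hfinj : Function.Injective f := by
      intro x y h
      by_cases hx1 : x = a₁
      · rw [hx1, hfa] at h
        by_cases hy1 : y = a₁
        · rw [hx1, hy1]
        by_cases hy2 : y = b₁
        · rw [hy2, hfb] at h; norm_num at h
        · rw [hfo y hy1 hy2] at h; exfalso; linarith [hjl y]
      by_cases hx2 : x = b₁
      · rw [hx2, hfb] at h
        by_cases hy1 : y = a₁
        · rw [hy1, hfa] at h; norm_num at h
        by_cases hy2 : y = b₁
        · rw [hx2, hy2]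
        · rw [hfo y hy1 hy2] at h; exfalso; linarith [hjl y]
      · rw [hfo x hx1 hx2] at h
        by_cases hy1 : y = a₁
        · rw [hy1, hfa] at h; exfalso; linarith [hjl x]
        by_cases hy2 : y = b₁
        · rw [hy2, hfb] at h; exfalso; linarith [hjl x]
        · rw [hfo y hy1 hy2] at h; exact hjinj h
    have hpA : ∀ x ∈ A, p x ∈ B := by
      intro x hx; simp only [hp]; rw [if_pos hx]; exact hb₁
    have hpB : ∀ x ∈ B, p x ∈ A := by
      intro x hx
      simp only [hp]
      rw [if_neg (fun hx' => Set.disjoint_left.1 hdisj hx' hx)]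
      exact ha₁
    have hC : ∀ x, ¬ MatchedIn E x → f (p x) < f x := by
      intro x hm
      have hxa : x ≠ a₁ := fun h => hm (h ▸ ⟨b₁, Or.inl he₁⟩)
      have hxb : x ≠ b₁ := fun h => hm (h ▸ ⟨a₁, Or.inr he₁⟩)
      rw [hfo x hxa hxb]
      simp only [hp]
      by_cases hx : x ∈ A
      · rw [if_pos hx, hfb]; linarith [hjl x]
      · rw [if_neg hx, hfa]; linarith [hjl x]
    have hCm : ∀ x, MatchedIn E x → MatchedIn E (p x) := by
      intro x _
      simp only [hp]
      by_cases hx : x ∈ A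
      · rw [if_pos hx]; exact ⟨a₁, Or.inr he₁⟩
      · rw [if_neg hx]; exact ⟨b₁, Or.inl he₁⟩
    exact auxMain A B hAne hBne hdisj hcover E hE hdegA hdegB f p
      hf0 hf1 hfinj hpA hpB hC hCm (Or.inl ⟨(a₁, b₁), he₁⟩)
end

section
/- Let (X,d) be a semimetric space. Then the following statements are equivalent: (1) for every pair of disjoint proximinal subsets A,B of X, every vertex of the proximinal graph G_{X,d}(A,B) has degree at most 1; (2) for all disjoint proximinal sets A,B ⊆ X, the sets A₀ = {a ∈ A : dist(a,B) = dist(A,B)} and B₀ = {b ∈ B : dist(b,A) = dist(A,B)} have equal cardinality; (3) for every proximinal A ⊆ X and every x ∈ X there exists exactly one best approximation to x in A; (4) for every subset Y ⊆ X and every x ∈ X there exists at most one best approximation to x in Y; (5) (X,d) is weakly rigid. -/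
open Set

universe u v

namespace Stmt7Aux
variable {X : Type u} {d : X → X → ℝ}
lemma pDist_le (hd : IsSemimetric d) {x a : X} {Y : Set X} (ha : a ∈ Y) :
    pDist d x Y ≤ d x a :=
  csInf_le ⟨0, by rintro r ⟨b, -, rfl⟩; exact hd.1 x b⟩ ⟨a, ha, rfl⟩
lemma le_pDist {x : X} {Y : Set X} (hY : Y.Nonempty) {c : ℝ}
    (h : ∀ a ∈ Y, c ≤ d x a) : c ≤ pDist d x Y := by
  refine le_csInf ⟨d x hY.choose, hY.choose, hY.choose_spec, rfl⟩ ?_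
  rintro r ⟨a, ha, rfl⟩; exact h a ha
lemma sDist_le (hd : IsSemimetric d) {A B : Set X} {a b : X} (ha : a ∈ A) (hb : b ∈ B) :
    sDist d A B ≤ d a b :=
  csInf_le ⟨0, by rintro r ⟨a', -, b', -, rfl⟩; exact hd.1 a' b'⟩ ⟨a, ha, b, hb, rfl⟩
lemma sDist_le_pDist (hd : IsSemimetric d) {A B : Set X} {a : X} (ha : a ∈ A)
    (hB : B.Nonempty) : sDist d A B ≤ pDist d a B :=
  le_pDist hB fun b hb => sDist_le hd ha hb
lemma pDist_singleton (x p : X) : pDist d x {p} = d x p := by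
  have h : {r | ∃ a ∈ ({p} : Set X), d x a = r} = {d x p} := by
    ext r; simp [eq_comm]
  rw [pDist, h, csInf_singleton]
lemma pDist_pair (x p q : X) : pDist d x {p, q} = min (d x p) (d x q) := by
  have h : {r | ∃ a ∈ ({p, q} : Set X), d x a = r} = {d x p, d x q} := by
    ext r
    constructor
    · rintro ⟨a, (rfl | rfl), rfl⟩
      · exact Or.inl rfl
      · exact Or.inr rfl
    · rintro (rfl | rfl)
      · exact ⟨p, Or.inl rfl, rfl⟩
      · exact ⟨q, Or.inr rfl, rfl⟩
  rw [pDist, h, csInf_pair]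
lemma prox_singleton (p : X) : Proximinal d {p} :=
  fun x => ⟨p, rfl, (pDist_singleton x p).symm⟩
lemma prox_pair (p q : X) : Proximinal d {p, q} := fun x => by
  rcases min_cases (d x p) (d x q) with ⟨h, -⟩ | ⟨h, -⟩
  · exact ⟨p, Or.inl rfl, by rw [pDist_pair, h]⟩
  · exact ⟨q, Or.inr rfl, by rw [pDist_pair, h]⟩
lemma nwr (hd : IsSemimetric d) (h : ¬ WeaklyRigid d) :
    ∃ x p q : X, x ≠ p ∧ x ≠ q ∧ p ≠ q ∧ d x p = d x q := by
  rw [WeaklyRigid] at h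
  push_neg at h
  obtain ⟨S, hS3, h⟩ := h
  rw [StronglyRigidOn] at h
  push_neg at h
  obtain ⟨x, hx, y, hy, u, hu, v, hv, hxy, hdeq, hpair⟩ := h
  have huv : u ≠ v := by
    rintro rfl
    exact hxy ((hd.2.2 x y).1 (hdeq.trans ((hd.2.2 u u).2 rfl)))
  by_cases hxu : x = u
  · subst hxu
    have hyv : y ≠ v := by rintro rfl; exact hpair rfl
    exact ⟨x, y, v, hxy, huv, hyv, hdeq⟩
  by_cases hxv : x = v
  · subst hxv
    have hyu : y ≠ u := by rintro rfl; exact hpair (Set.pair_comm x y)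
    exact ⟨x, y, u, hxy, Ne.symm huv, hyu, hdeq.trans (hd.2.1 u x)⟩
  by_cases hyu : y = u
  · subst hyu
    exact ⟨y, x, v, Ne.symm hxy, huv, hxv, (hd.2.1 y x).trans hdeq⟩
  by_cases hyv : y = v
  · subst hyv
    exact ⟨y, x, u, Ne.symm hxy, Ne.symm huv, hxu, ((hd.2.1 y x).trans hdeq).trans (hd.2.1 u y)⟩
  exfalso
  have hsub : ({x, y, u, v} : Set X) ⊆ S := by
    rintro z (rfl | rfl | rfl | rfl) <;> assumption
  have h4 : ({x, y, u, v} : Set X).encard = 4 := by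
    rw [Set.encard_insert_of_notMem (by simp [hxy, hxu, hxv]),
        Set.encard_insert_of_notMem (by simp [hyu, hyv]),
        Set.encard_pair huv]
    rfl
  have hle := Set.encard_mono hsub
  rw [h4, hS3] at hle
  norm_num at hle
end Stmt7Aux

open Stmt7Aux

/-- Characterizations of weakly rigid semimetric spaces. -/
theorem stmt_7 {X : Type u} [Nonempty X] (d : X → X → ℝ) (hd : IsSemimetric d) :
    List.TFAE [
      ∀ A B : Set X, Disjoint A B → Proximinal d A → Proximinal d B →
        (∀ a ∈ A, ∀ b₁ ∈ B, ∀ b₂ ∈ B,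
          d a b₁ = sDist d A B → d a b₂ = sDist d A B → b₁ = b₂) ∧
        (∀ b ∈ B, ∀ a₁ ∈ A, ∀ a₂ ∈ A,
          d a₁ b = sDist d A B → d a₂ b = sDist d A B → a₁ = a₂),
      ∀ A B : Set X, Disjoint A B → Proximinal d A → Proximinal d B →
        Cardinal.mk ↥{a ∈ A | pDist d a B = sDist d A B} =
          Cardinal.mk ↥{b ∈ B | pDist d b A = sDist d A B},
      ∀ A : Set X, Proximinal d A → ∀ x : X, ∃! a, a ∈ A ∧ d x a = pDist d x A,
      ∀ Y : Set X, ∀ x : X, ∀ a₁ ∈ Y, ∀ a₂ ∈ Y,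
        d x a₁ = pDist d x Y → d x a₂ = pDist d x Y → a₁ = a₂,
      WeaklyRigid d] := by
  tfae_have 1 → 2 := by
    intro h1 A B hdisj hA hB
    obtain ⟨a₀, ha₀, -⟩ := hA (Classical.arbitrary X)
    obtain ⟨b₀, hb₀, -⟩ := hB (Classical.arbitrary X)
    have hAne : A.Nonempty := ⟨a₀, ha₀⟩
    have hBne : B.Nonempty := ⟨b₀, hb₀⟩
    have key : ∀ (C E : Set X), C.Nonempty → Proximinal d E →
        (∀ e ∈ E, ∀ c₁ ∈ C, ∀ c₂ ∈ C,
          d c₁ e = sDist d C E → d c₂ e = sDist d C E → c₁ = c₂) →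
        Cardinal.mk ↥{c ∈ C | pDist d c E = sDist d C E} ≤
          Cardinal.mk ↥{e ∈ E | pDist d e C = sDist d C E} := by
      intro C E hC hPE huniq
      have hg : ∀ c : ↥{c ∈ C | pDist d c E = sDist d C E},
          ∃ e, (e ∈ {e ∈ E | pDist d e C = sDist d C E}) ∧ d c.1 e = sDist d C E := by
        rintro ⟨c, hc, hpc⟩
        obtain ⟨e, he, hde⟩ := hPE c
        have hdes : d c e = sDist d C E := hde.trans hpc
        refine ⟨e, ⟨he, le_antisymm ?_ ?_⟩, hdes⟩
        · rw [← hdes, hd.2.1 c e]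
          exact pDist_le hd hc
        · exact le_pDist hC fun c' hc' => by
            rw [hd.2.1 e c']; exact sDist_le hd hc' he
      choose g hg1 hg2 using hg
      refine Cardinal.mk_le_of_injective
        (f := fun c => (⟨g c, hg1 c⟩ : ↥{e ∈ E | pDist d e C = sDist d C E})) ?_
      rintro ⟨c₁, hc₁⟩ ⟨c₂, hc₂⟩ hEq
      have hgg : g ⟨c₁, hc₁⟩ = g ⟨c₂, hc₂⟩ := congrArg Subtype.val hEq
      apply Subtype.ext
      refine huniq (g ⟨c₁, hc₁⟩) (hg1 ⟨c₁, hc₁⟩).1 c₁ hc₁.1 c₂ hc₂.1 (hg2 ⟨c₁, hc₁⟩) ?_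
      rw [hgg]; exact hg2 ⟨c₂, hc₂⟩
    have scomm : sDist d A B = sDist d B A := by
      unfold sDist
      congr 1
      ext r
      constructor
      · rintro ⟨a, ha, b, hb, rfl⟩; exact ⟨b, hb, a, ha, hd.2.1 b a⟩
      · rintro ⟨b, hb, a, ha, rfl⟩; exact ⟨a, ha, b, hb, hd.2.1 a b⟩
    refine le_antisymm (key A B hAne hB (h1 A B hdisj hA hB).2) ?_
    have h2 := key B A hBne hA (h1 B A hdisj.symm hB hA).2
    rw [← scomm] at h2
    exact h2
  tfae_have 2 → 5 := by
    intro h2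
    by_contra h5
    obtain ⟨x, p, q, hxp, hxq, hpq, heq⟩ := nwr hd h5
    have hAB : Disjoint ({x} : Set X) {p, q} := by
      simp [Set.disjoint_left, hxp, hxq]
    have hset : {s | ∃ a ∈ ({x} : Set X), ∃ b ∈ ({p, q} : Set X), d a b = s}
        = {d x p, d x q} := by
      ext s
      constructor
      · rintro ⟨a, rfl, b, (rfl | rfl), rfl⟩
        · exact Or.inl rfl
        · exact Or.inr rfl
      · rintro (rfl | rfl)
        · exact ⟨x, rfl, p, Or.inl rfl, rfl⟩
        · exact ⟨x, rfl, q, Or.inr rfl, rfl⟩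
    have hsd : sDist d ({x} : Set X) {p, q} = d x p := by
      rw [sDist, hset, heq, Set.pair_eq_singleton, csInf_singleton]
    have hA0 : {a ∈ ({x} : Set X) | pDist d a {p, q} = sDist d {x} {p, q}} = {x} := by
      ext a
      constructor
      · exact fun h => h.1
      · rintro rfl
        refine ⟨rfl, ?_⟩
        rw [pDist_pair, hsd, ← heq, min_self]
    have hB0 : {b ∈ ({p, q} : Set X) | pDist d b {x} = sDist d {x} {p, q}} = {p, q} := by
      ext b
      constructor
      · exact fun h => h.1
      · intro hb
        refine ⟨hb, ?_⟩
        rw [pDist_singleton, hsd]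
        rcases hb with h | h
        · rw [h]; exact hd.2.1 p x
        · rw [h]; exact (hd.2.1 q x).trans heq.symm
    have hcard := h2 {x} {p, q} hAB (prox_singleton x) (prox_pair p q)
    rw [hA0, hB0] at hcard
    obtain ⟨e⟩ := Cardinal.eq.1 hcard.symm
    have hp' : p ∈ ({p, q} : Set X) := Or.inl rfl
    have hq' : q ∈ ({p, q} : Set X) := Or.inr rfl
    have hvp : (e ⟨p, hp'⟩).1 = x := (e ⟨p, hp'⟩).2
    have hvq : (e ⟨q, hq'⟩).1 = x := (e ⟨q, hq'⟩).2
    have : (⟨p, hp'⟩ : ↥({p, q} : Set X)) = ⟨q, hq'⟩ :=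
      e.injective (Subtype.ext (hvp.trans hvq.symm))
    exact hpq (congrArg Subtype.val this)
  tfae_have 5 → 4 := by
    intro h5 Y x a₁ ha₁ a₂ ha₂ e₁ e₂
    by_contra hne
    have hxa₁ : x ≠ a₁ := by
      rintro rfl
      have h0 : pDist d x Y = 0 := e₁.symm.trans ((hd.2.2 x x).2 rfl)
      exact hne ((hd.2.2 x a₂).1 (e₂.trans h0))
    have hxa₂ : x ≠ a₂ := by
      rintro rfl
      have h0 : pDist d x Y = 0 := e₂.symm.trans ((hd.2.2 x x).2 rfl)
      exact hne (((hd.2.2 x a₁).1 (e₁.trans h0)).symm)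
    have hS : ({x, a₁, a₂} : Set X).encard = 3 := by
      rw [Set.encard_insert_of_notMem (by simp [hxa₁, hxa₂]), Set.encard_pair hne]
      rfl
    have hpair := h5 _ hS x (by simp) a₁ (by simp) x (by simp) a₂ (by simp)
      hxa₁ (e₁.trans e₂.symm)
    have ha : a₁ ∈ ({x, a₂} : Set X) := by
      rw [← hpair]; exact Or.inr rfl
    rcases ha with h | h
    · exact hxa₁ h.symm
    · exact hne h
  tfae_have 4 → 3 := by
    intro h4 A hA x
    obtain ⟨a, ha, hda⟩ := hA x
    exact ⟨a, ⟨ha, hda⟩, fun y hy => h4 A x y hy.1 a ha hy.2 hda⟩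
  tfae_have 3 → 1 := by
    intro h3 A B hdisj hA hB
    obtain ⟨a₀, ha₀, -⟩ := hA (Classical.arbitrary X)
    obtain ⟨b₀, hb₀, -⟩ := hB (Classical.arbitrary X)
    have hAne : A.Nonempty := ⟨a₀, ha₀⟩
    have hBne : B.Nonempty := ⟨b₀, hb₀⟩
    constructor
    · intro a ha b₁ hb₁ b₂ hb₂ e₁ e₂
      have hp : pDist d a B = sDist d A B :=
        le_antisymm (by rw [← e₁]; exact pDist_le hd hb₁) (sDist_le_pDist hd ha hBne)
      exact (h3 B hB a).unique ⟨hb₁, e₁.trans hp.symm⟩ ⟨hb₂, e₂.trans hp.symm⟩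
    · intro b hb a₁ ha₁ a₂ ha₂ e₁ e₂
      have s₁ : d b a₁ = sDist d A B := (hd.2.1 b a₁).trans e₁
      have s₂ : d b a₂ = sDist d A B := (hd.2.1 b a₂).trans e₂
      have hp : pDist d b A = sDist d A B := by
        refine le_antisymm (by rw [← s₁]; exact pDist_le hd ha₁) ?_
        exact le_pDist hAne fun a ha => by rw [hd.2.1 b a]; exact sDist_le hd ha hb
      exact (h3 A hA b).unique ⟨ha₁, s₁.trans hp.symm⟩ ⟨ha₂, s₂.trans hp.symm⟩
  tfae_finish
end

section
/- Let (X,d) be a weakly rigid semimetric space, let A be a proximinal subset of X with X \ A nonempty, write B = X \ A, and let Γ be the bipartite graph with parts A and B in which, for a ∈ A and b ∈ B, {a,b} is an edge of Γ if and only if d(a,b) = dist(b,A). Then there exists an ultrametric ρ on X such that A and B are disjoint proximinal subsets of (X,ρ) and Γ equals the proximinal graph G_{X,ρ}(A,B), i.e., for all a ∈ A and b ∈ B, {a,b} is an edge of Γ if and only if ρ(a,b) = dist_ρ(A,B). -/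
open Set

universe u v

section Aux
open Classical

variable {X : Type u}

/-- The chosen nearest point in a proximinal set. -/
noncomputable def nearestPt {d : X → X → ℝ} {A : Set X}
    (hA : Proximinal d A) (x : X) : X := (hA x).choose

lemma nearestPt_mem {d : X → X → ℝ} {A : Set X}
    (hA : Proximinal d A) (x : X) : nearestPt hA x ∈ A := (hA x).choose_spec.1

lemma nearestPt_dist {d : X → X → ℝ} {A : Set X}
    (hA : Proximinal d A) (x : X) : d x (nearestPt hA x) = pDist d x A :=
  (hA x).choose_spec.2

lemma unique_nearest {d : X → X → ℝ} (hd : IsSemimetric d)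
    (hwr : WeaklyRigid d) {A : Set X} (hA : Proximinal d A)
    {a b : X} (ha : a ∈ A) (hb : b ∉ A) (hab : d a b = pDist d b A) :
    a = nearestPt hA b := by
  set n := nearestPt hA b with hn
  by_cases han : a = n
  · exact han
  have hba : b ≠ a := fun h => hb (h ▸ ha)
  have hbn : b ≠ n := fun h => hb (h ▸ nearestPt_mem hA b)
  have h3 : ({b, a, n} : Set X).encard = 3 := by
    rw [Set.encard_insert_of_notMem (by simp; exact ⟨hba, hbn⟩),
        Set.encard_pair han]
    rfl
  have hdba : d b a = d b n := by
    rw [hd.2.1 b a, hab, nearestPt_dist hA b]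
  have := hwr _ h3 b (by simp) a (by simp) b (by simp) n (by simp) hba hdba
  have ham : a ∈ ({b, n} : Set X) := this ▸ (by simp : a ∈ ({b, a} : Set X))
  rcases ham with h | h
  · exact absurd h.symm hba
  · exact h

/-- The class map: each point of `A` to itself, each point outside `A` to its nearest point. -/
noncomputable def cMap (d : X → X → ℝ) (A : Set X) (hA : Proximinal d A) (x : X) : X :=
  if x ∈ A then x else nearestPt hA x

/-- The partition ultrametric. -/
noncomputable def rhoC (d : X → X → ℝ) (A : Set X) (hA : Proximinal d A) (x y : X) : ℝ :=
  if x = y then 0 else if cMap d A hA x = cMap d A hA y then 1 else 2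

lemma rhoC_nonneg (d : X → X → ℝ) (A : Set X) (hA : Proximinal d A) (x y : X) :
    0 ≤ rhoC d A hA x y := by
  unfold rhoC; split_ifs <;> norm_num

lemma rhoC_one_le {d : X → X → ℝ} {A : Set X} {hA : Proximinal d A} {x y : X}
    (h : x ≠ y) : 1 ≤ rhoC d A hA x y := by
  unfold rhoC; rw [if_neg h]; split_ifs <;> norm_num

lemma rhoC_eq_one {d : X → X → ℝ} {A : Set X} {hA : Proximinal d A} {x y : X}
    (h : x ≠ y) (hc : cMap d A hA x = cMap d A hA y) : rhoC d A hA x y = 1 := by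
  unfold rhoC; rw [if_neg h, if_pos hc]

lemma rhoC_eq_two {d : X → X → ℝ} {A : Set X} {hA : Proximinal d A} {x y : X}
    (h : x ≠ y) (hc : cMap d A hA x ≠ cMap d A hA y) : rhoC d A hA x y = 2 := by
  unfold rhoC; rw [if_neg h, if_neg hc]

lemma rhoC_class {d : X → X → ℝ} {A : Set X} {hA : Proximinal d A} {x y : X}
    (h : x ≠ y) (hv : rhoC d A hA x y = 1) : cMap d A hA x = cMap d A hA y := by
  by_contra hc
  rw [rhoC_eq_two h hc] at hv
  norm_num at hv

lemma rhoC_self (d : X → X → ℝ) (A : Set X) (hA : Proximinal d A) (x : X) :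
    rhoC d A hA x x = 0 := by
  unfold rhoC; rw [if_pos rfl]

lemma rhoC_le_two (d : X → X → ℝ) (A : Set X) (hA : Proximinal d A) (x y : X) :
    rhoC d A hA x y ≤ 2 := by
  unfold rhoC; split_ifs <;> norm_num

lemma pDist_eq {d' : X → X → ℝ} {x : X} {A' : Set X} {a : X} (ha : a ∈ A')
    (hlb : ∀ b ∈ A', d' x a ≤ d' x b) : pDist d' x A' = d' x a := by
  apply le_antisymm
  · exact csInf_le ⟨d' x a, by rintro r ⟨b, hb, rfl⟩; exact hlb b hb⟩ ⟨a, ha, rfl⟩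
  · exact le_csInf ⟨_, a, ha, rfl⟩ (by rintro r ⟨b, hb, rfl⟩; exact hlb b hb)

lemma sDist_eq {d' : X → X → ℝ} {A' B' : Set X} {a b : X} (ha : a ∈ A') (hb : b ∈ B')
    (hlb : ∀ u ∈ A', ∀ v ∈ B', d' a b ≤ d' u v) : sDist d' A' B' = d' a b := by
  apply le_antisymm
  · exact csInf_le ⟨d' a b, by rintro r ⟨u, hu, v, hv, rfl⟩; exact hlb u hu v hv⟩
      ⟨a, ha, b, hb, rfl⟩
  · exact le_csInf ⟨_, a, ha, b, hb, rfl⟩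
      (by rintro r ⟨u, hu, v, hv, rfl⟩; exact hlb u hu v hv)

end Aux

/-- For a weakly rigid semimetric space `(X,d)` and a proximinal `A` with
nonempty complement `B = X \ A`, the graph with edges `{a,b}` for `d a b = dist(b,A)` is the
proximinal graph `G_{X,ρ}(A,B)` of some ultrametric `ρ` on `X`. -/
theorem stmt_8 {X : Type u} [Nonempty X] (d : X → X → ℝ) (hd : IsSemimetric d)
    (hwr : WeaklyRigid d) (A : Set X) (hA : Proximinal d A) (hne : Aᶜ.Nonempty) :
    ∃ ρ : X → X → ℝ, IsUltrametricD ρ ∧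
      Proximinal ρ A ∧ Proximinal ρ Aᶜ ∧
      ∀ a ∈ A, ∀ b ∈ Aᶜ, (d a b = pDist d b A ↔ ρ a b = sDist ρ A Aᶜ) := by
  classical
  set ρ := rhoC d A hA with hρdef
  set c := cMap d A hA with hcdef
  have hcA : ∀ x ∈ A, c x = x := fun x h => by simp [hcdef, cMap, h]
  have hcB : ∀ x ∉ A, c x = nearestPt hA x := fun x h => by simp [hcdef, cMap, h]
  have hAB : ∀ a ∈ A, ∀ b ∈ Aᶜ, a ≠ b := fun a ha b hb h => hb (h ▸ ha)
  -- semimetric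
  have hsym : ∀ x y, ρ x y = ρ y x := by
    intro x y
    by_cases h : x = y
    · rw [h]
    · rw [hρdef]
      unfold rhoC
      rw [if_neg h, if_neg (Ne.symm h)]
      by_cases hc : cMap d A hA x = cMap d A hA y
      · rw [if_pos hc, if_pos hc.symm]
      · rw [if_neg hc, if_neg (fun h' => hc h'.symm)]
  have hzero : ∀ x y, ρ x y = 0 ↔ x = y := by
    intro x y
    constructor
    · intro h
      by_contra hxy
      have := rhoC_one_le (hA := hA) (d := d) hxy
      rw [← hρdef, h] at this; norm_num at this
    · intro h; rw [h]; exact rhoC_self d A hA y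
  have hsemi : IsSemimetric ρ := ⟨rhoC_nonneg d A hA, hsym, hzero⟩
  -- ultrametric inequality
  have hult : ∀ x y z, ρ x y ≤ max (ρ x z) (ρ z y) := by
    intro x y z
    by_cases hxy : x = y
    · rw [hxy, hρdef, rhoC_self]
      exact le_trans (rhoC_nonneg d A hA y z) (le_max_left _ _)
    by_cases hxz : x = z
    · rw [hxz]; exact le_max_right _ _
    by_cases hzy : z = y
    · rw [← hzy]; exact le_max_left _ _
    by_cases h1 : c x = c z
    · by_cases h2 : c z = c y
      · rw [hρdef, rhoC_eq_one hxy (h1.trans h2), rhoC_eq_one hxz h1]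
        exact le_max_left _ _
      · rw [hρdef, rhoC_eq_two hzy h2]
        exact le_trans (rhoC_le_two d A hA x y) (le_max_right _ _)
    · rw [hρdef, rhoC_eq_two hxz h1]
      exact le_trans (rhoC_le_two d A hA x y) (le_max_left _ _)
  -- Proximinal ρ A
  have hPA : Proximinal ρ A := by
    intro x
    by_cases hx : x ∈ A
    · exact ⟨x, hx, by
        rw [pDist_eq hx (fun b _ => by
          rw [hρdef, rhoC_self]; exact rhoC_nonneg d A hA x b)]⟩
    · refine ⟨nearestPt hA x, nearestPt_mem hA x, ?_⟩
      have hxn : x ≠ nearestPt hA x := fun h => hx (h ▸ nearestPt_mem hA x)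
      have h1 : ρ x (nearestPt hA x) = 1 := by
        refine rhoC_eq_one hxn ?_
        rw [← hcdef, hcB x hx, hcA _ (nearestPt_mem hA x)]
      rw [pDist_eq (nearestPt_mem hA x) (fun b hb => by
        rw [h1]; exact rhoC_one_le (fun h => hx (h ▸ hb)))]
  -- Proximinal ρ Aᶜ
  have hPB : Proximinal ρ Aᶜ := by
    intro x
    by_cases hx : x ∈ A
    · by_cases hex : ∃ b ∈ Aᶜ, c b = x
      · obtain ⟨b, hb, hcb⟩ := hex
        refine ⟨b, hb, ?_⟩
        have h1 : ρ x b = 1 := rhoC_eq_one (hAB x hx b hb) (by rw [← hcdef, hcA x hx, hcb])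
        rw [pDist_eq hb (fun v hv => by
          rw [h1]; exact rhoC_one_le (hAB x hx v hv))]
      · push_neg at hex
        obtain ⟨b₀, hb₀⟩ := hne
        have hall : ∀ v ∈ Aᶜ, ρ x v = 2 := fun v hv =>
          rhoC_eq_two (hAB x hx v hv) (by rw [← hcdef, hcA x hx]; exact fun h => hex v hv h.symm)
        refine ⟨b₀, hb₀, ?_⟩
        rw [pDist_eq hb₀ (fun v hv => by rw [hall b₀ hb₀, hall v hv])]
    · exact ⟨x, hx, by
        rw [pDist_eq (a := x) hx (fun b _ => by
          rw [hρdef, rhoC_self]; exact rhoC_nonneg d A hA x b)]⟩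
  -- sDist = 1
  obtain ⟨b₀, hb₀⟩ := hne
  set a₀ := nearestPt hA b₀ with ha₀def
  have ha₀ : a₀ ∈ A := nearestPt_mem hA b₀
  have hρa₀ : ρ a₀ b₀ = 1 := by
    refine rhoC_eq_one (hAB a₀ ha₀ b₀ hb₀) ?_
    rw [← hcdef, hcA a₀ ha₀, hcB b₀ hb₀]
  have hs : sDist ρ A Aᶜ = 1 := by
    rw [sDist_eq ha₀ hb₀ (fun u hu v hv => by
      rw [hρa₀]; exact rhoC_one_le (hAB u hu v hv)), hρa₀]
  refine ⟨ρ, ⟨hsemi, hult⟩, hPA, hPB, ?_⟩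
  intro a ha b hb
  have hab : a ≠ b := hAB a ha b hb
  constructor
  · intro h
    have han : a = nearestPt hA b := unique_nearest hd hwr hA ha hb h
    rw [hs]
    refine rhoC_eq_one hab ?_
    rw [← hcdef, hcA a ha, hcB b hb, han]
  · intro h
    rw [hs] at h
    have hcc : c a = c b := rhoC_class hab h
    rw [hcA a ha, hcB b hb] at hcc
    rw [hd.2.1 a b, hcc, nearestPt_dist hA b]
end
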